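/- arXiv:2504.05953 — 10 statements merged into one kernel-verified Lean document; each statement's English description precedes it below -/
import Mathlib

section
/- In the domino graph D, there exist non-adjacent vertices u, v, a shortest uv-path P, and an induced uv-path Q of length at least 3, such that Q does not dominate P. -/
open SimpleGraph

/-- The internal vertices of a walk (support minus the two endpoints). -/
def internals {V : Type*} {G : SimpleGraph V} {u v : V} (W : G.Walk u v) : List V :=
  W.support.tail.dropLast

/-- A `uv`-walk `W` dominates a `uv`-walk `W'` if every internal vertex of `W'`
is adjacent to some internal vertex of `W` or belongs to `W`. -/
def Dominates {V : Type*} (G : SimpleGraph V) {u v : V} (W W' : G.Walk u v) : Prop :=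
  ∀ x ∈ internals W', x ∈ W.support ∨ ∃ y ∈ internals W, G.Adj x y

/-- An induced (chordless) path: a path such that any two vertices on it are
adjacent in `G` only if they are consecutive on the path. -/
def IsInducedPath {V : Type*} (G : SimpleGraph V) {u v : V} (W : G.Walk u v) : Prop :=
  W.IsPath ∧ ∀ a ∈ W.support, ∀ b ∈ W.support, G.Adj a b → W.toSubgraph.Adj a b

/-- `G` contains a hole: an induced (chordless) cycle of length at least 5. -/
def HasHole {V : Type*} (G : SimpleGraph V) : Prop :=
  ∃ (x : V) (c : G.Walk x x), c.IsCycle ∧ 5 ≤ c.length ∧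
    ∀ a ∈ c.support, ∀ b ∈ c.support, G.Adj a b → c.toSubgraph.Adj a b

/-- The house graph: 5-cycle `x0x1x2x3x4` plus the chord `x1x4`. -/
def houseGraph : SimpleGraph (Fin 5) :=
  SimpleGraph.fromEdgeSet {s(0,1), s(1,2), s(2,3), s(3,4), s(4,0), s(1,4)}

/-- The domino: 6-cycle `x0x1x2x3x4x5` plus the chord `x1x4`. -/
def dominoGraph : SimpleGraph (Fin 6) :=
  SimpleGraph.fromEdgeSet {s(0,1), s(1,2), s(2,3), s(3,4), s(4,5), s(5,0), s(1,4)}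

/-- The graph `X5`. -/
def x5Graph : SimpleGraph (Fin 6) :=
  SimpleGraph.fromEdgeSet {s(0,1), s(0,5), s(1,2), s(1,5), s(2,3), s(2,5), s(3,4), s(4,5)}

/-- The graph `F`. -/
def fGraph : SimpleGraph (Fin 7) :=
  SimpleGraph.fromEdgeSet {s(0,1), s(0,6), s(1,2), s(5,6), s(2,6), s(2,3), s(2,5), s(3,4), s(4,5)}

lemma h23 : dominoGraph.Adj 2 3 := by simp [dominoGraph]
lemma h34 : dominoGraph.Adj 3 4 := by simp [dominoGraph]
lemma h45 : dominoGraph.Adj 4 5 := by simp [dominoGraph]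
lemma h21 : dominoGraph.Adj 2 1 := by simp [dominoGraph]
lemma h10 : dominoGraph.Adj 1 0 := by simp [dominoGraph]
lemma h05 : dominoGraph.Adj 0 5 := by simp [dominoGraph]

def dominoP : dominoGraph.Walk 2 5 := Walk.cons h23 (Walk.cons h34 (Walk.cons h45 Walk.nil))
def dominoQ : dominoGraph.Walk 2 5 := Walk.cons h21 (Walk.cons h10 (Walk.cons h05 Walk.nil))

lemma adj_iff (a b : Fin 6) : dominoGraph.Adj a b ↔
    (s(a,b) = s(0,1) ∨ s(a,b) = s(1,2) ∨ s(a,b) = s(2,3) ∨ s(a,b) = s(3,4) ∨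
     s(a,b) = s(4,5) ∨ s(a,b) = s(5,0) ∨ s(a,b) = s(1,4)) ∧ a ≠ b := by
  simp [dominoGraph]

lemma dist25 : dominoGraph.dist 2 5 = 3 := by
  have hle : dominoGraph.dist 2 5 ≤ 3 := by
    have := SimpleGraph.dist_le dominoP
    simpa [dominoP] using this
  have hreach : dominoGraph.Reachable 2 5 := ⟨dominoP⟩
  obtain ⟨W, hW⟩ := hreach.exists_walk_length_eq_dist
  interval_cases h : dominoGraph.dist 2 5
  · have := W.eq_of_length_eq_zero hW
    simp at this
  · cases W with
    | cons hadj W' =>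
      simp at hW
      have := W'.eq_of_length_eq_zero (Walk.nil_iff_length_eq.mp hW)
      subst this
      rw [adj_iff] at hadj
      revert hadj; decide
  · cases W with
    | cons hadj W' =>
      cases W' with
      | nil => simp at hW
      | cons hadj2 W'' =>
        simp at hW
        have := W''.eq_of_length_eq_zero (Walk.nil_iff_length_eq.mp hW)
        subst this
        rw [adj_iff] at hadj hadj2
        rename_i v
        revert hadj hadj2
        revert v
        decide
  · rfl


theorem domino_m3_not_dominates_sp :
    ∃ u v : Fin 6, ¬ dominoGraph.Adj u v ∧
      ∃ (P Q : dominoGraph.Walk u v),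
        P.IsPath ∧ P.length = dominoGraph.dist u v ∧
        IsInducedPath dominoGraph Q ∧ 3 ≤ Q.length ∧
        ¬ Dominates dominoGraph Q P := by
  refine ⟨2, 5, by simp [dominoGraph], dominoP, dominoQ, ?_, ?_, ⟨?_, ?_⟩, ?_, ?_⟩
  · rw [Walk.isPath_def]; simp [dominoP]
  · rw [dist25]; rfl
  · rw [Walk.isPath_def]; simp [dominoQ]
  · intro a ha b hb hab
    simp [dominoQ] at ha hb ⊢
    rw [adj_iff] at hab
    revert hab
    rcases ha with rfl|rfl|rfl|rfl <;> rcases hb with rfl|rfl|rfl|rfl <;> decide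
  · rfl
  · intro hdom
    have h3 := hdom 3 (by simp [internals, dominoP])
    rcases h3 with h | ⟨y, hy, hadj⟩
    · simp [dominoQ] at h
    · simp [internals, dominoQ] at hy
      rw [adj_iff] at hadj
      rcases hy with rfl|rfl <;> revert hadj <;> decide
end

section
/- In the graph X5, there exist non-adjacent vertices u, v, a shortest uv-path P of length 3, and an induced uv-path Q of length 3 (an m3-path), such that Q does not dominate P. -/
open SimpleGraph

lemma x5_adj_iff (a b : Fin 6) : x5Graph.Adj a b ↔
    ((a = 0 ∧ b = 1) ∨ (a = 1 ∧ b = 0) ∨ (a = 0 ∧ b = 5) ∨ (a = 5 ∧ b = 0) ∨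
     (a = 1 ∧ b = 2) ∨ (a = 2 ∧ b = 1) ∨ (a = 1 ∧ b = 5) ∨ (a = 5 ∧ b = 1) ∨
     (a = 2 ∧ b = 3) ∨ (a = 3 ∧ b = 2) ∨ (a = 2 ∧ b = 5) ∨ (a = 5 ∧ b = 2) ∨
     (a = 3 ∧ b = 4) ∨ (a = 4 ∧ b = 3) ∨ (a = 4 ∧ b = 5) ∨ (a = 5 ∧ b = 4)) := by
  simp only [x5Graph, fromEdgeSet_adj, Set.mem_insert_iff, Set.mem_singleton_iff,
    Sym2.eq, Sym2.rel_iff', Prod.mk.injEq, Prod.swap_prod_mk]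
  fin_cases a <;> fin_cases b <;> simp

instance : DecidableRel x5Graph.Adj := fun a b => decidable_of_iff' _ (x5_adj_iff a b)

lemma x5_walk_len (w : x5Graph.Walk (0:Fin 6) 3) : 3 ≤ w.length := by
  by_contra h
  push_neg at h
  interval_cases hl : w.length
  · exact absurd (w.eq_of_length_eq_zero hl) (by decide)
  · have h1 := w.adj_getVert_succ (by omega : 0 < w.length)
    rw [w.getVert_zero, show (0:ℕ)+1 = w.length by omega, w.getVert_length] at h1
    exact absurd h1 (by decide)
  · have h1 := w.adj_getVert_succ (by omega : 0 < w.length)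
    have h2 := w.adj_getVert_succ (by omega : 1 < w.length)
    rw [w.getVert_zero] at h1
    rw [show (1:ℕ)+1 = w.length by omega, w.getVert_length] at h2
    revert h1 h2
    generalize w.getVert 1 = b
    fin_cases b <;> decide

theorem x5_m3_not_dominates_sp :
    ∃ u v : Fin 6, ¬ x5Graph.Adj u v ∧
      ∃ (P Q : x5Graph.Walk u v),
        P.IsPath ∧ P.length = 3 ∧ P.length = x5Graph.dist u v ∧
        IsInducedPath x5Graph Q ∧ Q.length = 3 ∧
        ¬ Dominates x5Graph Q P := by
  refine ⟨0, 3, by decide, ?_⟩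
  have h05 : x5Graph.Adj 0 5 := by decide
  have h54 : x5Graph.Adj 5 4 := by decide
  have h43 : x5Graph.Adj 4 3 := by decide
  have h01 : x5Graph.Adj 0 1 := by decide
  have h12 : x5Graph.Adj 1 2 := by decide
  have h23 : x5Graph.Adj 2 3 := by decide
  let P : x5Graph.Walk 0 3 := .cons h05 (.cons h54 (.cons h43 .nil))
  let Q : x5Graph.Walk 0 3 := .cons h01 (.cons h12 (.cons h23 .nil))
  refine ⟨P, Q, ?_, rfl, ?_, ⟨?_, ?_⟩, rfl, ?_⟩
  · rw [Walk.isPath_def]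
    simp only [P, Walk.support_cons, Walk.support_nil]
    decide
  · have hub : x5Graph.dist 0 3 ≤ 3 := by exact SimpleGraph.dist_le P
    have hlb : 3 ≤ x5Graph.dist 0 3 := by
      obtain ⟨w, hw⟩ := SimpleGraph.Reachable.exists_walk_length_eq_dist
        (⟨P⟩ : x5Graph.Reachable 0 3)
      rw [← hw]; exact x5_walk_len w
    show 3 = _
    omega
  · rw [Walk.isPath_def]
    simp only [Q, Walk.support_cons, Walk.support_nil]
    decide
  · intro a ha b hb hab
    rw [x5_adj_iff] at hab
    simp only [Q, Walk.support_cons, Walk.support_nil, List.mem_cons,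
      List.mem_singleton, List.not_mem_nil, or_false] at ha hb
    simp only [Q, Walk.toSubgraph, Subgraph.sup_adj, subgraphOfAdj_adj,
      singletonSubgraph_adj, Pi.bot_apply, Sym2.eq, Sym2.rel_iff',
      Prod.mk.injEq, Prod.swap_prod_mk, Prop.bot_eq_false, or_false]
    rcases ha with rfl | rfl | rfl | rfl <;> rcases hb with rfl | rfl | rfl | rfl <;>
      revert hab <;> decide
  · intro hD
    have h4 := hD 4 (by simp [internals, P, Walk.support_cons, Walk.support_nil])
    simp only [internals, Q, Walk.support_cons, Walk.support_nil, List.mem_cons,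
      List.mem_singleton, List.not_mem_nil, or_false, List.tail_cons,
      List.dropLast, List.mem_singleton] at h4
    revert h4
    decide
end

section
/- Let G be a finite simple connected graph with no induced cycle of length at least 5 (hole-free). Then for every pair of non-adjacent vertices u, v, every induced uv-path of length at least 3 dominates every uv-path of length 2. -/
open SimpleGraph

lemma mem_internals_aux {V : Type*} {G : SimpleGraph V} {u v : V} (W : G.Walk u v)
    (hlen : W.length ≠ 0) {a : V} (ha : a ∈ W.support) (hau : a ≠ u) (hav : a ≠ v) :
    a ∈ internals W := by
  rw [W.support_eq_cons] at ha
  rcases List.mem_cons.mp ha with h | h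
  · exact absurd h hau
  · have htne : W.support.tail ≠ [] := by
      cases W with
      | nil => simp at hlen
      | cons h p => simp [SimpleGraph.Walk.support_cons]
    have hlast : W.support.tail.getLast htne = v := by
      rw [List.getLast_tail]
      exact W.getLast_support
    have := List.dropLast_concat_getLast htne
    rw [hlast] at this
    rw [← this] at h
    rcases List.mem_append.mp h with h | h
    · exact h
    · simp at h; exact absurd h hav

lemma holefree_key {V : Type*} {G : SimpleGraph V}
    (hhole : ¬ (∃ (x : V) (c : G.Walk x x), c.IsCycle ∧ 5 ≤ c.length ∧
      ∀ a ∈ c.support, ∀ b ∈ c.support, G.Adj a b → c.toSubgraph.Adj a b))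
    (u v : V) (huv : ¬ G.Adj u v) (W : G.Walk u v)
    (hW : W.IsPath ∧ ∀ a ∈ W.support, ∀ b ∈ W.support, G.Adj a b → W.toSubgraph.Adj a b)
    (h3 : 3 ≤ W.length)
    (b : V) (hub : G.Adj u b) (hbv : G.Adj b v) :
    b ∈ W.support ∨ ∃ y ∈ internals W, G.Adj b y := by
  by_contra hcon
  push_neg at hcon
  obtain ⟨hbW, hint⟩ := hcon
  obtain ⟨hP, hInd⟩ := hW
  have hWne : W.length ≠ 0 := by omega
  have huv' : u ≠ v := by
    rintro rfl
    rw [Walk.isPath_iff_eq_nil] at hP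
    subst hP
    simp at h3
  set q : G.Walk v u := Walk.cons hbv.symm (Walk.cons hub.symm Walk.nil) with hq
  set c : G.Walk u u := W.append q with hcdef
  have hcsup : c.support = W.support ++ [b, u] := by
    rw [hcdef, Walk.support_append, hq]
    simp
  have hctail : c.support.tail = W.support.tail ++ [b, u] := by
    rw [hcdef, Walk.tail_support_append, hq]; simp
  have huW : u ∉ W.support.tail := by
    have := hP.support_nodup
    rw [W.support_eq_cons] at this
    exact (List.nodup_cons.mp this).1
  have hbW' : b ∉ W.support.tail := fun h => hbW (List.mem_of_mem_tail h)
  have hcycle : c.IsCycle := by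
    constructor
    constructor
    · -- IsTrail
      rw [Walk.isTrail_def, hcdef, Walk.edges_append, hq]
      simp only [Walk.edges_cons, Walk.edges_nil]
      rw [List.nodup_append]
      refine ⟨hP.isTrail.edges_nodup, ?_, ?_⟩
      · simp only [List.nodup_cons, List.mem_singleton, List.not_mem_nil, List.nodup_nil,
          and_true, not_false_iff]
        rw [Sym2.eq_iff]
        rintro (⟨h1, -⟩ | ⟨h1, -⟩)
        · exact hbv.ne' h1
        · exact huv' h1.symm
      · intro e he e' he'
        simp only [List.mem_cons, List.mem_singleton, List.not_mem_nil, or_false] at he'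
        rintro rfl
        rcases he' with rfl | rfl
        · exact hbW (W.snd_mem_support_of_mem_edges he)
        · exact hbW (W.fst_mem_support_of_mem_edges he)
    · -- not nil
      intro h
      have := congrArg Walk.length h
      simp [hcdef, hq] at this
    · -- tail nodup
      rw [hctail]
      rw [List.nodup_append]
      have hnt : W.support.tail.Nodup := by
        have := hP.support_nodup
        rw [W.support_eq_cons] at this
        exact (List.nodup_cons.mp this).2
      refine ⟨hnt, ?_, ?_⟩
      · simp [hub.ne']
      · intro x hx y hy
        simp only [List.mem_cons, List.mem_singleton, List.not_mem_nil, or_false] at hy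
        rintro rfl
        rcases hy with rfl | rfl
        · exact hbW' hx
        · exact huW hx
  have hlen : 5 ≤ c.length := by
    rw [hcdef, Walk.length_append, hq]; simp; omega
  refine hhole ⟨u, c, hcycle, hlen, ?_⟩
  intro a ha a' ha' hadj
  rw [hcsup] at ha ha'
  have hmem : ∀ z : V, z ∈ W.support ++ [b, u] → z ∈ W.support ∨ z = b := by
    intro z hz
    rcases List.mem_append.mp hz with h | h
    · exact Or.inl h
    · simp at h
      rcases h with h | h
      · exact Or.inr h
      · exact Or.inl (h ▸ W.start_mem_support)
  have hadjsub : ∀ x y : V, W.toSubgraph.Adj x y → c.toSubgraph.Adj x y := by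
    intro x y h
    rw [hcdef, Walk.toSubgraph_append]
    exact Or.inl h
  have hqadj : ∀ x y : V, (x = v ∧ y = b) ∨ (x = b ∧ y = v) ∨ (x = b ∧ y = u) ∨ (x = u ∧ y = b)
      → c.toSubgraph.Adj x y := by
    rintro x y (⟨rfl, rfl⟩ | ⟨rfl, rfl⟩ | ⟨rfl, rfl⟩ | ⟨rfl, rfl⟩) <;>
    · rw [hcdef, Walk.toSubgraph_append, hq]
      right
      simp [Sym2.eq_iff]
  -- key: if z ∈ W.support and Adj b z then z = u or z = v
  have hkey : ∀ z ∈ W.support, G.Adj b z → z = u ∨ z = v := by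
    intro z hz hbz
    by_contra hcon
    push_neg at hcon
    exact hint z (mem_internals_aux W hWne hz hcon.1 hcon.2) hbz
  rcases hmem a ha with haW | rfl <;> rcases hmem a' ha' with haW' | rfl
  · exact hadjsub _ _ (hInd a haW a' haW' hadj)
  · rcases hkey a haW hadj.symm with rfl | rfl
    · exact hqadj _ _ (Or.inr (Or.inr (Or.inr ⟨rfl, rfl⟩)))
    · exact hqadj _ _ (Or.inl ⟨rfl, rfl⟩)
  · rcases hkey a' haW' hadj with rfl | rfl
    · exact hqadj _ _ (Or.inr (Or.inr (Or.inl ⟨rfl, rfl⟩)))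
    · exact hqadj _ _ (Or.inr (Or.inl ⟨rfl, rfl⟩))
  · exact absurd hadj (G.irrefl)


theorem holeFree_m3_dominates_l2 {V : Type*} [Fintype V] (G : SimpleGraph V)
    (hc : G.Connected) (hhole : ¬ HasHole G)
    (u v : V) (huv : ¬ G.Adj u v) (W W' : G.Walk u v)
    (hW : IsInducedPath G W) (h3 : 3 ≤ W.length)
    (hW' : W'.IsPath) (h2 : W'.length = 2) :
    Dominates G W W' := by
  intro x hx
  cases W' with
  | nil => simp [Walk.length_nil] at h2
  | cons hub p =>
    cases p with
    | nil => simp [Walk.length_cons] at h2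
    | cons hbv q =>
      cases q with
      | cons h q' => simp [Walk.length_cons] at h2
      | nil =>
        simp only [internals, Walk.support_cons, Walk.support_nil, List.tail_cons,
          List.dropLast_concat, List.dropLast, List.mem_cons, List.not_mem_nil, or_false,
          List.mem_singleton] at hx
        subst hx
        unfold HasHole at hhole
        exact holefree_key hhole u v huv W ⟨hW.1, hW.2⟩ h3 x hub hbv
end

section
/- If a finite simple connected graph G contains a hole as an induced subgraph, then there exist non-adjacent vertices u, v, an induced uv-path W of length at least 3, and a uv-path W' of length 2, such that W does not dominate W'. Consequently, the class m3/l2 equals the class of hole-free graphs. -/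
open SimpleGraph

section Helpers

variable {V : Type*} {G : SimpleGraph V}

lemma toSubgraph_adj_iff_mem_edges {u v a b : V} (p : G.Walk u v) :
    p.toSubgraph.Adj a b ↔ s(a, b) ∈ p.edges := by
  rw [← SimpleGraph.Subgraph.mem_edgeSet, Walk.mem_edges_toSubgraph]

lemma getLast_not_mem_dropLast {α : Type*} {l : List α} (h : l.Nodup) (hne : l ≠ []) :
    l.getLast hne ∉ l.dropLast := by
  intro hm
  conv at h => rw [← List.dropLast_append_getLast hne]
  exact (List.disjoint_of_nodup_append h) hm (by simp)

lemma path_loop_length_zero {u : V} {p : G.Walk u u} (h : p.IsPath) : p.length = 0 := by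
  cases p with
  | nil => rfl
  | cons h' q =>
    exfalso
    rw [Walk.cons_isPath_iff] at h
    exact h.2 q.end_mem_support

lemma ne_of_isPath {u v : V} {p : G.Walk u v} (h : p.IsPath) (hl : 1 ≤ p.length) : u ≠ v := by
  rintro rfl
  have := path_loop_length_zero h
  omega

lemma tail_getLast {u v : V} (p : G.Walk u v) (hne : p.support.tail ≠ []) :
    p.support.tail.getLast hne = v := by
  have h := p.getLast_support
  have h2 : p.support.getLast (by simp) = (u :: p.support.tail).getLast (by simp) := by
    congr 1
    exact p.support_eq_cons
  rw [h2, List.getLast_cons hne] at h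
  exact h

lemma eq_endpoints_of_not_internal {u v b : V} {p : G.Walk u v}
    (hb : b ∈ p.support) (h : b ∉ internals p) : b = u ∨ b = v := by
  rw [p.support_eq_cons, List.mem_cons] at hb
  rcases hb with rfl | hb
  · exact Or.inl rfl
  · right
    have hne : p.support.tail ≠ [] := List.ne_nil_of_mem hb
    rw [← List.dropLast_append_getLast hne, List.mem_append, List.mem_singleton] at hb
    rcases hb with hb | rfl
    · exact absurd hb h
    · exact tail_getLast p hne

lemma start_end_edge_not_mem {u v : V} {p : G.Walk u v} (hp : p.IsPath) (hl : 2 ≤ p.length) :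
    s(u, v) ∉ p.edges := by
  cases p with
  | nil => simp
  | @cons _ w _ h3 p' =>
    rw [Walk.cons_isPath_iff] at hp
    simp only [Walk.edges_cons, List.mem_cons]
    rintro (he | he)
    · rw [Sym2.eq_iff] at he
      rcases he with ⟨-, rfl⟩ | ⟨rfl, rfl⟩
      · have := path_loop_length_zero hp.1
        simp only [Walk.length_cons] at hl
        omega
      · exact G.irrefl h3
    · exact hp.2 (p'.fst_mem_support_of_mem_edges he)

lemma hasHole_spec (hh : HasHole G) :
    ∃ u v : V, ¬ G.Adj u v ∧ ∃ (W W' : G.Walk u v),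
        IsInducedPath G W ∧ 3 ≤ W.length ∧ W'.IsPath ∧ W'.length = 2 ∧
        ¬ Dominates G W W' := by
  obtain ⟨x, c, hcyc, hlen, hind⟩ := hh
  cases c with
  | nil => simp at hlen
  | @cons _ y _ h1 q =>
    cases q with
    | nil => simp at hlen
    | @cons _ z _ h2 p =>
      rw [Walk.cons_isCycle_iff] at hcyc
      obtain ⟨hqpath, hxe⟩ := hcyc
      rw [Walk.cons_isPath_iff] at hqpath
      obtain ⟨hp, hy⟩ := hqpath
      have hplen : 3 ≤ p.length := by
        simp only [Walk.length_cons] at hlen; omega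
      have hnodup : p.support.Nodup := hp.support_nodup
      have hzx : z ≠ x := ne_of_isPath hp (by omega)
      have hxy : x ≠ y := G.ne_of_adj h1
      have hyz : y ≠ z := G.ne_of_adj h2
      have hzsup : z ∈ p.support := p.start_mem_support
      have hxsup : x ∈ p.support := p.end_mem_support
      have hmem : ∀ a, a ∈ p.support ∨ a = y →
          a ∈ (Walk.cons h1 (Walk.cons h2 p)).support := by
        intro a ha
        simp only [Walk.support_cons, List.mem_cons]
        tauto
      have hkey : ∀ a b, a ∈ p.support ∨ a = y → b ∈ p.support ∨ b = y → G.Adj a b →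
          s(a, b) = s(x, y) ∨ s(a, b) = s(y, z) ∨ s(a, b) ∈ p.edges := by
        intro a b ha hb hab
        have h := (toSubgraph_adj_iff_mem_edges _).mp (hind a (hmem a ha) b (hmem b hb) hab)
        simpa using h
      -- z ∉ tail of support
      have hztail : z ∉ p.support.tail := by
        have h := hnodup
        rw [p.support_eq_cons, List.nodup_cons] at h
        exact h.1
      -- x ∉ internals p
      have htailnd : p.support.tail.Nodup := by
        have h := hnodup
        rw [p.support_eq_cons, List.nodup_cons] at h
        exact h.2
      have hxtail : x ∈ p.support.tail := Walk.end_mem_tail_support_of_ne hzx p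
      have htne : p.support.tail ≠ [] := List.ne_nil_of_mem hxtail
      have hxint : x ∉ internals p := by
        have h := getLast_not_mem_dropLast htailnd htne
        rw [tail_getLast p htne] at h
        exact h
      -- nonadjacency of the endpoints
      have hnadj : ¬ G.Adj z x := by
        intro hadj
        rcases hkey z x (Or.inl hzsup) (Or.inl hxsup) hadj with he | he | he
        · rw [Sym2.eq_iff] at he
          rcases he with ⟨hzx', -⟩ | ⟨hzy, -⟩
          · exact hzx hzx'
          · exact hy (hzy ▸ hzsup)
        · rw [Sym2.eq_iff] at he
          rcases he with ⟨hzy, -⟩ | ⟨-, hxy'⟩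
          · exact hy (hzy ▸ hzsup)
          · exact hxy hxy'
        · exact start_end_edge_not_mem hp (by omega) he
      have hzy : z ≠ y := fun h => hy (h ▸ hzsup)
      have hyx : y ≠ x := fun h => hy (by rw [h]; exact hxsup)
      refine ⟨z, x, hnadj, p, Walk.cons h2.symm (Walk.cons h1.symm Walk.nil),
        ⟨hp, ?_⟩, hplen, ?_, by simp, ?_⟩
      · intro a ha b hb hab
        rcases hkey a b (Or.inl ha) (Or.inl hb) hab with he | he | he
        · exfalso
          rw [Sym2.eq_iff] at he
          rcases he with ⟨-, rfl⟩ | ⟨rfl, -⟩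
          · exact hy hb
          · exact hy ha
        · exfalso
          rw [Sym2.eq_iff] at he
          rcases he with ⟨rfl, -⟩ | ⟨-, rfl⟩
          · exact hy ha
          · exact hy hb
        · exact (toSubgraph_adj_iff_mem_edges p).mpr he
      · rw [Walk.isPath_def]
        simp [hzy, hzx, hyx]
      · intro hdom
        have hy' := hdom y (by simp [internals])
        rcases hy' with h | ⟨w, hw, hadj⟩
        · exact hy h
        · have hwtail : w ∈ p.support.tail := List.dropLast_subset _ hw
          have hwsup : w ∈ p.support := List.mem_of_mem_tail hwtail
          rcases hkey y w (Or.inr rfl) (Or.inl hwsup) hadj with he | he | he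
          · rw [Sym2.eq_iff] at he
            rcases he with ⟨hyx', -⟩ | ⟨-, rfl⟩
            · exact hyx hyx'
            · exact hxint hw
          · rw [Sym2.eq_iff] at he
            rcases he with ⟨-, rfl⟩ | ⟨hyz', -⟩
            · exact hztail hwtail
            · exact hyz hyz'
          · exact hy (p.fst_mem_support_of_mem_edges he)

lemma isInduced_of_path_len2 {u v : V} (hna : ¬ G.Adj u v)
    (W' : G.Walk u v) (hp : W'.IsPath) (hl : W'.length = 2) : IsInducedPath G W' := by
  cases W' with
  | nil => simp at hl
  | @cons _ m _ h1 q =>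
    cases q with
    | nil => simp at hl
    | @cons _ m2 _ h2 r =>
      cases r with
      | cons h3 s => simp only [Walk.length_cons] at hl; omega
      | nil =>
        refine ⟨hp, ?_⟩
        intro a ha b hb hab
        rw [toSubgraph_adj_iff_mem_edges]
        simp only [Walk.support_cons, Walk.support_nil, List.mem_cons, List.mem_singleton,
          List.not_mem_nil, or_false] at ha hb
        simp only [Walk.edges_cons, Walk.edges_nil, List.mem_cons, List.not_mem_nil, or_false]
        rcases ha with rfl | rfl | rfl <;> rcases hb with rfl | rfl | rfl <;>
          first
          | exact absurd rfl (G.ne_of_adj hab)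
          | exact absurd hab hna
          | exact absurd hab.symm hna
          | exact Or.inl rfl
          | exact Or.inl Sym2.eq_swap
          | exact Or.inr rfl
          | exact Or.inr Sym2.eq_swap

lemma dominates_of_not_hasHole (hnh : ¬ HasHole G)
    {u v : V} (hna : ¬ G.Adj u v) (W W' : G.Walk u v) (hW : IsInducedPath G W)
    (hl : 3 ≤ W.length) (hW'p : W'.IsPath) (hl' : W'.length ≤ 2) :
    Dominates G W W' := by
  have huv : u ≠ v := ne_of_isPath hW.1 (by omega)
  cases W' with
  | nil => exact absurd rfl huv
  | @cons _ m _ h1 q =>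
    cases q with
    | nil => exact absurd h1 hna
    | @cons _ m2 _ h2 r =>
      cases r with
      | cons h3 s => simp only [Walk.length_cons] at hl'; omega
      | nil =>
        intro t ht
        have ht' : t = m := by simpa [internals] using ht
        subst ht'
        by_contra hcon
        push_neg at hcon
        obtain ⟨hm, hmy⟩ := hcon
        refine absurd ⟨t, Walk.cons h1.symm (W.concat h2.symm), ?_, ?_, ?_⟩ hnh
        · rw [Walk.cons_isCycle_iff]
          constructor
          · rw [Walk.isPath_def, Walk.support_concat]
            simp [List.nodup_append, hW.1.support_nodup, hm]
            exact fun a ha hat => hm (hat ▸ ha)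
          · rw [Walk.edges_concat, List.concat_eq_append]
            simp only [List.mem_append, List.mem_singleton]
            rintro (he | he)
            · exact hm (W.fst_mem_support_of_mem_edges he)
            · rw [Sym2.eq_iff] at he
              rcases he with ⟨rfl, -⟩ | ⟨-, huv'⟩
              · exact hm W.end_mem_support
              · exact huv huv'
        · simp only [Walk.length_cons, Walk.length_concat]
          omega
        · intro a ha b hb hab
          simp only [Walk.support_cons, Walk.support_concat, List.concat_eq_append,
            List.mem_cons, List.mem_append, List.mem_singleton] at ha hb
          rw [toSubgraph_adj_iff_mem_edges]
          simp only [Walk.edges_cons, Walk.edges_concat, List.concat_eq_append,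
            List.mem_cons, List.mem_append, List.mem_singleton, List.not_mem_nil, or_false]
          have hend : ∀ b', b' ∈ W.support → G.Adj t b' → b' = u ∨ b' = v := by
            intro b' hb' hadj
            have : b' ∉ internals W := fun hint => hmy b' hint hadj
            exact eq_endpoints_of_not_internal hb' this
          have ha' : a = t ∨ a ∈ W.support := by tauto
          have hb' : b = t ∨ b ∈ W.support := by tauto
          rcases ha' with rfl | ha'
          · rcases hb' with rfl | hb'
            · exact absurd rfl (G.ne_of_adj hab)
            · rcases hend b hb' hab with rfl | rfl
              · exact Or.inl rfl
              · exact Or.inr (Or.inr Sym2.eq_swap)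
          · rcases hb' with rfl | hb'
            · rcases hend a ha' hab.symm with rfl | rfl
              · exact Or.inl Sym2.eq_swap
              · exact Or.inr (Or.inr rfl)
            · exact Or.inr (Or.inl ((toSubgraph_adj_iff_mem_edges W).mp
                (hW.2 a ha' b hb' hab)))

end Helpers

theorem m3_l2_eq_holeFree {V : Type*} [Fintype V] (G : SimpleGraph V)
    (hc : G.Connected) :
    (HasHole G → ∃ u v : V, ¬ G.Adj u v ∧ ∃ (W W' : G.Walk u v),
        IsInducedPath G W ∧ 3 ≤ W.length ∧ W'.IsPath ∧ W'.length = 2 ∧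
        ¬ Dominates G W W') ∧
    ((∀ u v : V, ¬ G.Adj u v → ∀ (W W' : G.Walk u v),
        IsInducedPath G W → 3 ≤ W.length →
        IsInducedPath G W' → W'.length ≤ 2 → Dominates G W W') ↔ ¬ HasHole G) := by
  refine ⟨hasHole_spec, ?_, ?_⟩
  · intro hP hh
    obtain ⟨u, v, hna, W, W', hW, hlW, hW'p, hW'l, hndom⟩ := hasHole_spec hh
    exact hndom (hP u v hna W W' hW hlW (isInduced_of_path_len2 hna W' hW'p hW'l)
      (le_of_eq hW'l))
  · intro hnh u v hna W W' hW hlW hW' hl'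
    exact dominates_of_not_hasHole hnh hna W W' hW hlW hW'.1 hl'
end

section
/- Let G be a finite simple connected graph with no induced subgraph isomorphic to a hole, the domino D, the graph F, or the graph X5. Then for every pair of non-adjacent vertices u, v, every induced uv-path of length at least 3 dominates every induced uv-path of length at most 3. -/
open SimpleGraph

section Helpers
variable {V : Type*} {G : SimpleGraph V}

lemma getVert_inj {u v : V} {W : G.Walk u v} (hW : W.IsPath) :
    ∀ {i j : ℕ}, i ≤ W.length → j ≤ W.length → W.getVert i = W.getVert j → i = j := by
  induction W with
  | nil => intro i j hi hj _; simp [Walk.length_nil] at hi hj; omega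
  | @cons a b c h q ih =>
    intro i j hi hj hij
    have ha : a ∉ q.support := by
      have := hW.support_nodup
      simp [Walk.support_cons] at this; exact this.1
    have hq : q.IsPath := hW.of_cons
    match i, j with
    | 0, 0 => rfl
    | 0, j+1 =>
      exfalso; apply ha
      rw [Walk.getVert_zero] at hij; rw [Walk.getVert_cons_succ] at hij
      rw [hij]
      exact Walk.mem_support_iff_exists_getVert.2 ⟨j, rfl, by simpa using Nat.lt_succ_iff.1 (Nat.lt_of_lt_of_le (Nat.lt_succ_self j) (by simpa [Walk.length_cons] using hj))⟩
    | i+1, 0 =>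
      exfalso; apply ha
      rw [Walk.getVert_zero] at hij; rw [Walk.getVert_cons_succ] at hij
      rw [← hij]
      exact Walk.mem_support_iff_exists_getVert.2 ⟨i, rfl, by simp [Walk.length_cons] at hi; omega⟩
    | i+1, j+1 =>
      simp only [Walk.getVert_cons_succ] at hij
      simp only [Walk.length_cons] at hi hj
      exact congrArg (·+1) (ih hq (by omega) (by omega) hij)


lemma induced_not_adj {u v : V} {W : G.Walk u v} (hW : IsInducedPath G W) {i j : ℕ}
    (hi : i ≤ W.length) (hj : j ≤ W.length) (hij : j ≠ i + 1) (hji : i ≠ j + 1) :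
    ¬ G.Adj (W.getVert i) (W.getVert j) := by
  intro hadj
  have hmi : W.getVert i ∈ W.support := Walk.mem_support_iff_exists_getVert.2 ⟨i, rfl, hi⟩
  have hmj : W.getVert j ∈ W.support := Walk.mem_support_iff_exists_getVert.2 ⟨j, rfl, hj⟩
  obtain ⟨l, hl, hllen⟩ := (Walk.toSubgraph_adj_iff _).1 (hW.2 _ hmi _ hmj hadj)
  rw [Sym2.eq_iff] at hl
  rcases hl with ⟨h1, h2⟩ | ⟨h1, h2⟩
  · have := getVert_inj hW.1 (by omega) hi h1
    have := getVert_inj hW.1 (by omega) hj h2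
    omega
  · have := getVert_inj hW.1 (by omega) hj h1
    have := getVert_inj hW.1 (by omega) hi h2
    omega

lemma mem_internals_iff {u v : V} {W : G.Walk u v} (hW : W.IsPath) (hlen : 1 ≤ W.length) {x : V} :
    x ∈ internals W ↔ ∃ i, 0 < i ∧ i < W.length ∧ W.getVert i = x := by
  have hsup : W.support = u :: W.support.tail := (Walk.support_eq_cons W)
  have htne : W.support.tail ≠ [] := by
    intro h
    have := congrArg List.length hsup
    rw [h] at this
    simp only [Walk.length_support, List.length_cons, List.length_nil] at this; omega
  have hlast : W.support.tail.getLast htne = v := by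
    rw [List.getLast_tail]; exact Walk.getLast_support W
  constructor
  · intro hx
    have hx1 : x ∈ W.support.tail := List.mem_of_mem_dropLast hx
    have hx0 : x ∈ W.support := List.mem_of_mem_tail hx1
    obtain ⟨i, hgi, hile⟩ := Walk.mem_support_iff_exists_getVert.1 hx0
    have hnd := hW.support_nodup
    have hxu : x ≠ u := by
      intro h; rw [hsup] at hnd
      exact (List.nodup_cons.1 hnd).1 (h ▸ hx1)
    have hxv : x ≠ v := by
      intro h
      have hndt : W.support.tail.Nodup := by
        rw [hsup] at hnd; exact (List.nodup_cons.1 hnd).2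
      have heq := List.dropLast_append_getLast htne
      rw [hlast] at heq
      rw [← heq] at hndt
      have := List.disjoint_of_nodup_append hndt
      exact this (h ▸ hx) (by simp)
    refine ⟨i, ?_, ?_, hgi⟩
    · rcases Nat.eq_zero_or_pos i with h0 | h0
      · exact absurd (by rw [← hgi, h0, Walk.getVert_zero]) hxu
      · exact h0
    · rcases Nat.lt_or_ge i W.length with h0 | h0
      · exact h0
      · have : i = W.length := by omega
        exact absurd (by rw [← hgi, this, Walk.getVert_length]) hxv
  · rintro ⟨i, h0, hik, rfl⟩
    have hmem : W.getVert i ∈ W.support := Walk.mem_support_iff_exists_getVert.2 ⟨i, rfl, by omega⟩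
    have hxu : W.getVert i ≠ u := by
      intro h
      have : i = 0 := getVert_inj hW (by omega) (by omega) (by simpa using h)
      omega
    have hxv : W.getVert i ≠ v := by
      intro h
      have : i = W.length := getVert_inj hW (by omega) (le_refl _) (by simpa using h)
      omega
    have hxt : W.getVert i ∈ W.support.tail := by
      rw [hsup] at hmem
      rcases List.mem_cons.1 hmem with h | h
      · exact absurd h hxu
      · exact h
    have heq := List.dropLast_append_getLast htne
    rw [hlast] at heq
    rw [← heq] at hxt
    rcases List.mem_append.1 hxt with h | h
    · exact h
    · simp at h; exact absurd h hxv


def walkOfFn (G : SimpleGraph V) (p : ℕ → V) :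
    (n : ℕ) → (∀ i, i < n → G.Adj (p i) (p (i+1))) → G.Walk (p 0) (p n)
  | 0, _ => Walk.nil
  | n+1, h =>
    Walk.cons (h 0 (Nat.succ_pos n))
      (walkOfFn G (fun i => p (i+1)) n (fun i hi => h (i+1) (by omega)))

@[simp] lemma length_walkOfFn (p : ℕ → V) (n : ℕ) (h : ∀ i, i < n → G.Adj (p i) (p (i+1))) :
    (walkOfFn G p n h).length = n := by
  induction n generalizing p with
  | zero => rfl
  | succ n ih => simp [walkOfFn, ih]

lemma getVert_walkOfFn (p : ℕ → V) (n : ℕ) (h : ∀ i, i < n → G.Adj (p i) (p (i+1)))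
    {i : ℕ} (hi : i ≤ n) : (walkOfFn G p n h).getVert i = p i := by
  induction n generalizing p i with
  | zero => interval_cases i; rfl
  | succ n ih =>
    match i with
    | 0 => rfl
    | i+1 =>
      rw [walkOfFn, Walk.getVert_cons_succ]
      exact ih _ _ (by omega)

lemma support_walkOfFn (p : ℕ → V) (n : ℕ) (h : ∀ i, i < n → G.Adj (p i) (p (i+1))) :
    (walkOfFn G p n h).support = (List.range (n+1)).map p := by
  induction n generalizing p with
  | zero => simp [walkOfFn, List.range_succ]
  | succ n ih =>
    rw [walkOfFn, Walk.support_cons, ih]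
    conv_rhs => rw [List.range_succ_eq_map]
    simp [List.map_map, Function.comp_def]

lemma edges_walkOfFn (p : ℕ → V) (n : ℕ) (h : ∀ i, i < n → G.Adj (p i) (p (i+1))) :
    (walkOfFn G p n h).edges = (List.range n).map (fun i => s(p i, p (i+1))) := by
  induction n generalizing p with
  | zero => simp [walkOfFn]
  | succ n ih =>
    rw [walkOfFn, Walk.edges_cons, ih]
    conv_rhs => rw [List.range_succ_eq_map]
    simp [List.map_map, Function.comp_def]

lemma hasHole_of_fn (p : ℕ → V) (n : ℕ) (hn : 5 ≤ n)
    (hadj : ∀ i, i < n → G.Adj (p i) (p (i+1)))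
    (hclose : p n = p 0)
    (hinj : ∀ i j, i < n → j < n → p i = p j → i = j)
    (hchord : ∀ i j, i < j → j < n → G.Adj (p i) (p j) → j = i + 1 ∨ (i = 0 ∧ j + 1 = n)) :
    HasHole G := by
  have hadj' : ∀ i, i < n - 1 → G.Adj (p (i+1)) (p (i+1+1)) := fun i hi => hadj (i+1) (by omega)
  set q : G.Walk (p 1) (p (n-1+1)) := walkOfFn G (fun i => p (i+1)) (n-1) hadj' with hq
  have hn1 : n - 1 + 1 = n := by omega
  have hcast : p (n-1+1) = p 0 := by rw [hn1, hclose]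
  set q' : G.Walk (p 1) (p 0) := q.copy rfl hcast with hq'
  have hqs : q'.support = (List.range n).map (fun i => p (i+1)) := by
    rw [hq', Walk.support_copy, hq, support_walkOfFn, hn1]
  have hinj' : ∀ i j, i ≤ n → j ≤ n → p i = p j → i = j ∨ (i = 0 ∧ j = n) ∨ (i = n ∧ j = 0) := by
    intro i j hi hj hpij
    rcases Nat.lt_or_ge i n with hi' | hi'
    · rcases Nat.lt_or_ge j n with hj' | hj'
      · exact Or.inl (hinj _ _ hi' hj' hpij)
      · have hjn : j = n := by omega
        rw [hjn, hclose] at hpij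
        rw [hjn]
        rcases Nat.eq_zero_or_pos i with h0 | h0
        · exact Or.inr (Or.inl ⟨h0, rfl⟩)
        · exact absurd (hinj i 0 hi' (by omega) hpij) (by omega)
    · have hin : i = n := by omega
      rw [hin, hclose] at hpij
      rw [hin]
      rcases Nat.lt_or_ge j n with hj' | hj'
      · rcases Nat.eq_zero_or_pos j with h0 | h0
        · exact Or.inr (Or.inr ⟨rfl, h0⟩)
        · exact absurd (hinj j 0 hj' (by omega) hpij.symm) (by omega)
      · left; omega
  have hqpath : q'.IsPath := by
    rw [Walk.isPath_def, hqs]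
    refine List.Nodup.map_on ?_ List.nodup_range
    intro i hi j hj hij
    simp only [List.mem_range] at hi hj
    have := hinj' (i+1) (j+1) (by omega) (by omega) hij
    omega
  have hcyc : (Walk.cons (hadj 0 (by omega)) q').IsCycle := by
    rw [Walk.cons_isCycle_iff]
    refine ⟨hqpath, ?_⟩
    rw [hq', Walk.edges_copy, hq, edges_walkOfFn]
    intro hmem
    obtain ⟨i, hi, hie⟩ := List.mem_map.1 hmem
    simp only [List.mem_range] at hi
    rw [Sym2.eq_iff] at hie
    rcases hie with ⟨h1, h2⟩ | ⟨h1, h2⟩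
    · have := hinj' (i+1) 0 (by omega) (by omega) h1
      omega
    · have := hinj' (i+1) 1 (by omega) (by omega) h1
      have h2' := hinj' (i+1+1) 0 (by omega) (by omega) h2
      omega
  set c : G.Walk (p 0) (p 0) := Walk.cons (hadj 0 (by omega)) q' with hc
  have hclen : c.length = n := by
    rw [hc, Walk.length_cons, hq', Walk.length_copy, hq, length_walkOfFn]; omega
  have hcsup : c.support = (List.range (n+1)).map p := by
    rw [hc, Walk.support_cons, hqs, List.range_succ_eq_map]
    simp [List.map_map, Function.comp_def]
  have hgetc : ∀ i, i ≤ n → c.getVert i = p i := by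
    intro i hi
    match i with
    | 0 => rfl
    | i+1 =>
      rw [hc, Walk.getVert_cons_succ, hq', Walk.getVert_copy, hq,
        getVert_walkOfFn _ _ _ (by omega)]
  have key : ∀ l, l < n → c.toSubgraph.Adj (p l) (p (l+1)) := by
    intro l hl
    have := Walk.toSubgraph_adj_getVert c (by omega : l < c.length)
    rwa [hgetc l (by omega), hgetc (l+1) (by omega)] at this
  have main : ∀ i j, i < j → j ≤ n → G.Adj (p i) (p j) → c.toSubgraph.Adj (p i) (p j) := by
    intro i j hij hjn hab
    rcases Nat.lt_or_ge j n with hj' | hj'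
    · rcases hchord i j hij hj' hab with h | ⟨h0, hwrap⟩
      · subst h; exact key i (by omega)
      · subst h0
        have := key j (by omega)
        rw [(show j + 1 = n by omega), hclose] at this
        exact this.symm
    · have hjn' : j = n := by omega
      rw [hjn', hclose] at hab ⊢
      rcases Nat.eq_zero_or_pos i with h0 | h0
      · subst h0; exact (G.irrefl hab).elim
      · rcases hchord 0 i h0 (by omega) hab.symm with h | ⟨_, hwrap⟩
        · have := key 0 (by omega); rw [← h] at this; exact this.symm
        · have := key i (by omega)
          rw [(show i + 1 = n by omega), hclose] at this
          exact this
  refine ⟨p 0, c, hcyc, by omega, ?_⟩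
  intro a ha b hb hab
  rw [hcsup] at ha hb
  obtain ⟨i, hi, rfl⟩ := List.mem_map.1 ha
  obtain ⟨j, hj, rfl⟩ := List.mem_map.1 hb
  simp only [List.mem_range] at hi hj
  rcases Nat.lt_trichotomy i j with h | h | h
  · exact main i j h (by omega) hab
  · subst h; exact (G.irrefl hab).elim
  · exact (main j i h (by omega) hab.symm).symm


def embed_of_table {n : ℕ} {H : SimpleGraph (Fin n)} (f : Fin n → V)
    (hinj : Function.Injective f)
    (hiff : ∀ i j : Fin n, G.Adj (f i) (f j) ↔ H.Adj i j) : H ↪g G :=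
  ⟨⟨f, hinj⟩, hiff _ _⟩
set_option maxHeartbeats 1600000 in
lemma no_domino (hD : IsEmpty (dominoGraph ↪g G)) (v0  v1  v2  v3  v4  v5 : V)
    (e01 : G.Adj v0 v1) (e05 : G.Adj v0 v5) (e12 : G.Adj v1 v2) (e14 : G.Adj v1 v4) (e23 : G.Adj v2 v3) (e34 : G.Adj v3 v4) (e45 : G.Adj v4 v5) (n02 : ¬G.Adj v0 v2) (n03 : ¬G.Adj v0 v3) (n04 : ¬G.Adj v0 v4) (n13 : ¬G.Adj v1 v3) (n15 : ¬G.Adj v1 v5) (n24 : ¬G.Adj v2 v4) (n25 : ¬G.Adj v2 v5) (n35 : ¬G.Adj v3 v5) (d02 : v0 ≠ v2) (d03 : v0 ≠ v3) (d04 : v0 ≠ v4) (d13 : v1 ≠ v3) (d15 : v1 ≠ v5) (d24 : v2 ≠ v4) (d25 : v2 ≠ v5) (d35 : v3 ≠ v5) : False := by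
  have d01 : v0 ≠ v1 := e01.ne
  have e10 : G.Adj v1 v0 := e01.symm
  have d05 : v0 ≠ v5 := e05.ne
  have e50 : G.Adj v5 v0 := e05.symm
  have d12 : v1 ≠ v2 := e12.ne
  have e21 : G.Adj v2 v1 := e12.symm
  have d14 : v1 ≠ v4 := e14.ne
  have e41 : G.Adj v4 v1 := e14.symm
  have d23 : v2 ≠ v3 := e23.ne
  have e32 : G.Adj v3 v2 := e23.symm
  have d34 : v3 ≠ v4 := e34.ne
  have e43 : G.Adj v4 v3 := e34.symm
  have d45 : v4 ≠ v5 := e45.ne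
  have e54 : G.Adj v5 v4 := e45.symm
  have n20 : ¬G.Adj v2 v0 := fun h => n02 h.symm
  have n30 : ¬G.Adj v3 v0 := fun h => n03 h.symm
  have n40 : ¬G.Adj v4 v0 := fun h => n04 h.symm
  have n31 : ¬G.Adj v3 v1 := fun h => n13 h.symm
  have n51 : ¬G.Adj v5 v1 := fun h => n15 h.symm
  have n42 : ¬G.Adj v4 v2 := fun h => n24 h.symm
  have n52 : ¬G.Adj v5 v2 := fun h => n25 h.symm
  have n53 : ¬G.Adj v5 v3 := fun h => n35 h.symm
  have d10 : v1 ≠ v0 := d01.symm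
  have d20 : v2 ≠ v0 := d02.symm
  have d30 : v3 ≠ v0 := d03.symm
  have d40 : v4 ≠ v0 := d04.symm
  have d50 : v5 ≠ v0 := d05.symm
  have d21 : v2 ≠ v1 := d12.symm
  have d31 : v3 ≠ v1 := d13.symm
  have d41 : v4 ≠ v1 := d14.symm
  have d51 : v5 ≠ v1 := d15.symm
  have d32 : v3 ≠ v2 := d23.symm
  have d42 : v4 ≠ v2 := d24.symm
  have d52 : v5 ≠ v2 := d25.symm
  have d43 : v4 ≠ v3 := d34.symm
  have d53 : v5 ≠ v3 := d35.symm
  have d54 : v5 ≠ v4 := d45.symm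
  apply hD.false
  apply embed_of_table ![v0, v1, v2, v3, v4, v5]
  · intro i j hij
    fin_cases i <;> fin_cases j <;>
      simp only [Matrix.cons_val_zero, Matrix.cons_val_one, Matrix.head_cons,
        Matrix.cons_val_succ, Matrix.cons_val_fin_one] at hij <;>
      first
        | rfl
        | exact absurd hij (by assumption)
  · intro i j
    fin_cases i <;> fin_cases j <;>
      simp [dominoGraph, Matrix.cons_val_zero, Matrix.cons_val_one, Matrix.head_cons,
        Matrix.cons_val_succ, Matrix.cons_val_fin_one] <;>
      first
        | exact G.irrefl
        | assumption

set_option maxHeartbeats 1600000 in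
lemma no_x5 (hX : IsEmpty (x5Graph ↪g G)) (v0  v1  v2  v3  v4  v5 : V)
    (e01 : G.Adj v0 v1) (e05 : G.Adj v0 v5) (e12 : G.Adj v1 v2) (e15 : G.Adj v1 v5) (e23 : G.Adj v2 v3) (e25 : G.Adj v2 v5) (e34 : G.Adj v3 v4) (e45 : G.Adj v4 v5) (n02 : ¬G.Adj v0 v2) (n03 : ¬G.Adj v0 v3) (n04 : ¬G.Adj v0 v4) (n13 : ¬G.Adj v1 v3) (n14 : ¬G.Adj v1 v4) (n24 : ¬G.Adj v2 v4) (n35 : ¬G.Adj v3 v5) (d02 : v0 ≠ v2) (d03 : v0 ≠ v3) (d04 : v0 ≠ v4) (d13 : v1 ≠ v3) (d14 : v1 ≠ v4) (d24 : v2 ≠ v4) (d35 : v3 ≠ v5) : False := by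
  have d01 : v0 ≠ v1 := e01.ne
  have e10 : G.Adj v1 v0 := e01.symm
  have d05 : v0 ≠ v5 := e05.ne
  have e50 : G.Adj v5 v0 := e05.symm
  have d12 : v1 ≠ v2 := e12.ne
  have e21 : G.Adj v2 v1 := e12.symm
  have d15 : v1 ≠ v5 := e15.ne
  have e51 : G.Adj v5 v1 := e15.symm
  have d23 : v2 ≠ v3 := e23.ne
  have e32 : G.Adj v3 v2 := e23.symm
  have d25 : v2 ≠ v5 := e25.ne
  have e52 : G.Adj v5 v2 := e25.symm
  have d34 : v3 ≠ v4 := e34.ne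
  have e43 : G.Adj v4 v3 := e34.symm
  have d45 : v4 ≠ v5 := e45.ne
  have e54 : G.Adj v5 v4 := e45.symm
  have n20 : ¬G.Adj v2 v0 := fun h => n02 h.symm
  have n30 : ¬G.Adj v3 v0 := fun h => n03 h.symm
  have n40 : ¬G.Adj v4 v0 := fun h => n04 h.symm
  have n31 : ¬G.Adj v3 v1 := fun h => n13 h.symm
  have n41 : ¬G.Adj v4 v1 := fun h => n14 h.symm
  have n42 : ¬G.Adj v4 v2 := fun h => n24 h.symm
  have n53 : ¬G.Adj v5 v3 := fun h => n35 h.symm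
  have d10 : v1 ≠ v0 := d01.symm
  have d20 : v2 ≠ v0 := d02.symm
  have d30 : v3 ≠ v0 := d03.symm
  have d40 : v4 ≠ v0 := d04.symm
  have d50 : v5 ≠ v0 := d05.symm
  have d21 : v2 ≠ v1 := d12.symm
  have d31 : v3 ≠ v1 := d13.symm
  have d41 : v4 ≠ v1 := d14.symm
  have d51 : v5 ≠ v1 := d15.symm
  have d32 : v3 ≠ v2 := d23.symm
  have d42 : v4 ≠ v2 := d24.symm
  have d52 : v5 ≠ v2 := d25.symm
  have d43 : v4 ≠ v3 := d34.symm
  have d53 : v5 ≠ v3 := d35.symm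
  have d54 : v5 ≠ v4 := d45.symm
  apply hX.false
  apply embed_of_table ![v0, v1, v2, v3, v4, v5]
  · intro i j hij
    fin_cases i <;> fin_cases j <;>
      simp only [Matrix.cons_val_zero, Matrix.cons_val_one, Matrix.head_cons,
        Matrix.cons_val_succ, Matrix.cons_val_fin_one] at hij <;>
      first
        | rfl
        | exact absurd hij (by assumption)
  · intro i j
    fin_cases i <;> fin_cases j <;>
      simp [x5Graph, Matrix.cons_val_zero, Matrix.cons_val_one, Matrix.head_cons,
        Matrix.cons_val_succ, Matrix.cons_val_fin_one] <;>
      first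
        | exact G.irrefl
        | assumption

set_option maxHeartbeats 1600000 in
lemma no_f (hF : IsEmpty (fGraph ↪g G)) (v0  v1  v2  v3  v4  v5  v6 : V)
    (e01 : G.Adj v0 v1) (e06 : G.Adj v0 v6) (e12 : G.Adj v1 v2) (e23 : G.Adj v2 v3) (e25 : G.Adj v2 v5) (e26 : G.Adj v2 v6) (e34 : G.Adj v3 v4) (e45 : G.Adj v4 v5) (e56 : G.Adj v5 v6) (n02 : ¬G.Adj v0 v2) (n03 : ¬G.Adj v0 v3) (n04 : ¬G.Adj v0 v4) (n05 : ¬G.Adj v0 v5) (n13 : ¬G.Adj v1 v3) (n14 : ¬G.Adj v1 v4) (n15 : ¬G.Adj v1 v5) (n16 : ¬G.Adj v1 v6) (n24 : ¬G.Adj v2 v4) (n35 : ¬G.Adj v3 v5) (n36 : ¬G.Adj v3 v6) (n46 : ¬G.Adj v4 v6) (d02 : v0 ≠ v2) (d03 : v0 ≠ v3) (d04 : v0 ≠ v4) (d05 : v0 ≠ v5) (d13 : v1 ≠ v3) (d14 : v1 ≠ v4) (d15 : v1 ≠ v5) (d16 : v1 ≠ v6) (d24 : v2 ≠ v4) (d35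 : v3 ≠ v5) (d36 : v3 ≠ v6) (d46 : v4 ≠ v6) : False := by
  have d01 : v0 ≠ v1 := e01.ne
  have e10 : G.Adj v1 v0 := e01.symm
  have d06 : v0 ≠ v6 := e06.ne
  have e60 : G.Adj v6 v0 := e06.symm
  have d12 : v1 ≠ v2 := e12.ne
  have e21 : G.Adj v2 v1 := e12.symm
  have d23 : v2 ≠ v3 := e23.ne
  have e32 : G.Adj v3 v2 := e23.symm
  have d25 : v2 ≠ v5 := e25.ne
  have e52 : G.Adj v5 v2 := e25.symm
  have d26 : v2 ≠ v6 := e26.ne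
  have e62 : G.Adj v6 v2 := e26.symm
  have d34 : v3 ≠ v4 := e34.ne
  have e43 : G.Adj v4 v3 := e34.symm
  have d45 : v4 ≠ v5 := e45.ne
  have e54 : G.Adj v5 v4 := e45.symm
  have d56 : v5 ≠ v6 := e56.ne
  have e65 : G.Adj v6 v5 := e56.symm
  have n20 : ¬G.Adj v2 v0 := fun h => n02 h.symm
  have n30 : ¬G.Adj v3 v0 := fun h => n03 h.symm
  have n40 : ¬G.Adj v4 v0 := fun h => n04 h.symm
  have n50 : ¬G.Adj v5 v0 := fun h => n05 h.symm
  have n31 : ¬G.Adj v3 v1 := fun h => n13 h.symm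
  have n41 : ¬G.Adj v4 v1 := fun h => n14 h.symm
  have n51 : ¬G.Adj v5 v1 := fun h => n15 h.symm
  have n61 : ¬G.Adj v6 v1 := fun h => n16 h.symm
  have n42 : ¬G.Adj v4 v2 := fun h => n24 h.symm
  have n53 : ¬G.Adj v5 v3 := fun h => n35 h.symm
  have n63 : ¬G.Adj v6 v3 := fun h => n36 h.symm
  have n64 : ¬G.Adj v6 v4 := fun h => n46 h.symm
  have d10 : v1 ≠ v0 := d01.symm
  have d20 : v2 ≠ v0 := d02.symm
  have d30 : v3 ≠ v0 := d03.symm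
  have d40 : v4 ≠ v0 := d04.symm
  have d50 : v5 ≠ v0 := d05.symm
  have d60 : v6 ≠ v0 := d06.symm
  have d21 : v2 ≠ v1 := d12.symm
  have d31 : v3 ≠ v1 := d13.symm
  have d41 : v4 ≠ v1 := d14.symm
  have d51 : v5 ≠ v1 := d15.symm
  have d61 : v6 ≠ v1 := d16.symm
  have d32 : v3 ≠ v2 := d23.symm
  have d42 : v4 ≠ v2 := d24.symm
  have d52 : v5 ≠ v2 := d25.symm
  have d62 : v6 ≠ v2 := d26.symm
  have d43 : v4 ≠ v3 := d34.symm
  have d53 : v5 ≠ v3 := d35.symm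
  have d63 : v6 ≠ v3 := d36.symm
  have d54 : v5 ≠ v4 := d45.symm
  have d64 : v6 ≠ v4 := d46.symm
  have d65 : v6 ≠ v5 := d56.symm
  apply hF.false
  apply embed_of_table ![v0, v1, v2, v3, v4, v5, v6]
  · intro i j hij
    fin_cases i <;> fin_cases j <;>
      simp only [Matrix.cons_val_zero, Matrix.cons_val_one, Matrix.head_cons,
        Matrix.cons_val_succ, Matrix.cons_val_fin_one] at hij <;>
      first
        | rfl
        | exact absurd hij (by assumption)
  · intro i j
    fin_cases i <;> fin_cases j <;>
      simp [fGraph, Matrix.cons_val_zero, Matrix.cons_val_one, Matrix.head_cons,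
        Matrix.cons_val_succ, Matrix.cons_val_fin_one] <;>
      first
        | exact G.irrefl
        | assumption


/-- A hole from a path segment `p s, ..., p t` together with one extra vertex `x`
adjacent to both ends. -/
lemma hole_seg1 (p : ℕ → V) (s t : ℕ) (x : V) (h5 : 3 ≤ t - s)
    (hadj : ∀ i, s ≤ i → i < t → G.Adj (p i) (p (i+1)))
    (hxs : G.Adj x (p s)) (htx : G.Adj (p t) x)
    (hinj : ∀ i j, s ≤ i → i ≤ t → s ≤ j → j ≤ t → p i = p j → i = j)
    (hxp : ∀ i, s ≤ i → i ≤ t → x ≠ p i)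
    (hchord : ∀ i j, s ≤ i → i < j → j ≤ t → G.Adj (p i) (p j) → j = i + 1)
    (hxchord : ∀ i, s < i → i < t → ¬ G.Adj x (p i)) : HasHole G := by
  set n := t - s + 2 with hn
  set q : ℕ → V := fun j => if j ≤ t - s then p (s + j) else if j = t - s + 1 then x else p s
    with hq
  have eqp : ∀ j, j ≤ t - s → q j = p (s + j) := fun j hj => if_pos hj
  have eqx : q (t - s + 1) = x := by rw [hq]; simp
  have eqn : q n = p s := by rw [hq, hn]; simp
  have eq0 : q 0 = p s := by rw [hq]; simp
  have eqt : q (t - s) = p t := by rw [eqp _ (le_refl _)]; congr 1; omega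
  apply hasHole_of_fn q n (by omega)
  · intro i hi
    rcases Nat.lt_or_ge i (t - s) with h1 | h1
    · rw [eqp i (by omega), eqp (i+1) (by omega), show s + (i+1) = (s+i) + 1 by omega]
      exact hadj _ (by omega) (by omega)
    · rcases Nat.eq_or_lt_of_le h1 with h2 | h2
      · rw [← h2, eqt, eqx]
        exact htx
      · rw [show i = t - s + 1 by omega, eqx, show t - s + 1 + 1 = n by omega, eqn]
        exact hxs
  · rw [eqn, eq0]
  · intro i j hi hj hij
    rcases Nat.lt_or_ge i (t - s + 1) with h1 | h1 <;> rcases Nat.lt_or_ge j (t - s + 1) with h2 | h2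
    · rw [eqp i (by omega), eqp j (by omega)] at hij
      have := hinj _ _ (by omega) (by omega) (by omega) (by omega) hij
      omega
    · rw [eqp i (by omega), show j = t - s + 1 by omega, eqx] at hij
      exact absurd hij.symm (hxp _ (by omega) (by omega))
    · rw [eqp j (by omega), show i = t - s + 1 by omega, eqx] at hij
      exact absurd hij (hxp _ (by omega) (by omega))
    · omega
  · intro i j hij hj hadjq
    rcases Nat.lt_or_ge j (t - s + 1) with h2 | h2
    · rw [eqp i (by omega), eqp j (by omega)] at hadjq
      have := hchord _ _ (by omega) (by omega) (by omega) hadjq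
      omega
    · have hj' : j = t - s + 1 := by omega
      rw [hj', eqx, eqp i (by omega)] at hadjq
      rcases Nat.eq_or_lt_of_le (Nat.zero_le i) with h0 | h0
      · right; omega
      · rcases Nat.lt_or_ge i (t - s) with h3 | h3
        · exact absurd hadjq.symm (hxchord _ (by omega) (by omega))
        · left; omega

/-- A hole from a path segment `p 0, ..., p t` together with two extra vertices `x, y`:
the cycle `p 0 ⋯ p t x y (p 0)`. -/
lemma hole_seg2 (p : ℕ → V) (t : ℕ) (x y : V) (h5 : 2 ≤ t)
    (hadj : ∀ i, i < t → G.Adj (p i) (p (i+1)))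
    (htx : G.Adj (p t) x) (hxy : G.Adj x y) (hy0 : G.Adj y (p 0))
    (hinj : ∀ i j, i ≤ t → j ≤ t → p i = p j → i = j)
    (hxp : ∀ i, i ≤ t → x ≠ p i) (hyp : ∀ i, i ≤ t → y ≠ p i) (hxyne : x ≠ y)
    (hchord : ∀ i j, i < j → j ≤ t → G.Adj (p i) (p j) → j = i + 1)
    (hxchord : ∀ i, i < t → ¬ G.Adj x (p i))
    (hychord : ∀ i, 0 < i → i ≤ t → ¬ G.Adj y (p i)) : HasHole G := by
  set n := t + 3 with hn
  set q : ℕ → V := fun j => if j ≤ t then p j else if j = t + 1 then x else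
    if j = t + 2 then y else p 0 with hq
  have eqp : ∀ j, j ≤ t → q j = p j := fun j hj => if_pos hj
  have eqx : q (t + 1) = x := by rw [hq]; simp
  have eqy : q (t + 2) = y := by rw [hq]; simp
  have eqn : q n = p 0 := by rw [hq, hn]; simp
  apply hasHole_of_fn q n (by omega)
  · intro i hi
    rcases Nat.lt_or_ge i t with h1 | h1
    · rw [eqp i (by omega), eqp (i+1) (by omega)]
      exact hadj _ h1
    · rcases Nat.eq_or_lt_of_le h1 with h2 | h2
      · rw [← h2, eqp t (le_refl _), eqx]; exact htx
      · rcases Nat.eq_or_lt_of_le (show t + 1 ≤ i by omega) with h3 | h3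
        · rw [show i + 1 = t + 2 by omega, eqy, ← h3, eqx]; exact hxy
        · rw [show i = t + 2 by omega, eqy, show t + 2 + 1 = n by omega, eqn]; exact hy0
  · rw [eqn, eqp 0 (by omega)]
  · intro i j hi hj hij
    have keyx : ∀ l, l ≤ t → q l ≠ x := by
      intro l hl; rw [eqp l hl]; exact fun h => hxp l hl h.symm
    have keyy : ∀ l, l ≤ t → q l ≠ y := by
      intro l hl; rw [eqp l hl]; exact fun h => hyp l hl h.symm
    rcases Nat.lt_or_ge i (t+1) with h1 | h1 <;> rcases Nat.lt_or_ge j (t+1) with h2 | h2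
    · rw [eqp i (by omega), eqp j (by omega)] at hij
      exact hinj _ _ (by omega) (by omega) hij
    · rcases Nat.eq_or_lt_of_le h2 with h3 | h3
      · rw [← h3, eqx] at hij; exact absurd hij (keyx i (by omega))
      · rw [show j = t + 2 by omega, eqy] at hij; exact absurd hij (keyy i (by omega))
    · rcases Nat.eq_or_lt_of_le h1 with h3 | h3
      · rw [← h3, eqx] at hij; exact absurd hij.symm (keyx j (by omega))
      · rw [show i = t + 2 by omega, eqy] at hij; exact absurd hij.symm (keyy j (by omega))
    · rcases Nat.eq_or_lt_of_le h1 with h3 | h3 <;> rcases Nat.eq_or_lt_of_le h2 with h4 | h4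
      · omega
      · rw [← h3, eqx, show j = t + 2 by omega, eqy] at hij; exact absurd hij hxyne
      · rw [← h4, eqx, show i = t + 2 by omega, eqy] at hij; exact absurd hij.symm hxyne
      · omega
  · intro i j hij hj hadjq
    rcases Nat.lt_or_ge j (t+1) with h2 | h2
    · rw [eqp i (by omega), eqp j (by omega)] at hadjq
      left; exact hchord _ _ hij (by omega) hadjq
    · rcases Nat.eq_or_lt_of_le h2 with h3 | h3
      · -- j = t+1 : q j = x
        rw [← h3, eqx, eqp i (by omega)] at hadjq
        rcases Nat.lt_or_ge i t with h4 | h4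
        · exact absurd hadjq.symm (hxchord i h4)
        · left; omega
      · -- j = t+2 : q j = y
        have hj3 : j = t + 2 := by omega
        rw [hj3, eqy] at hadjq
        rcases Nat.lt_or_ge i (t+1) with h4 | h4
        · rw [eqp i (by omega)] at hadjq
          rcases Nat.eq_zero_or_pos i with h5' | h5'
          · right; omega
          · exact absurd hadjq.symm (hychord i h5' (by omega))
        · -- i = t+1 : x ~ y, edge
          left; omega


lemma induced_reverse {u v : V} {W : G.Walk u v} (hW : IsInducedPath G W) :
    IsInducedPath G W.reverse := by
  refine ⟨hW.1.reverse, ?_⟩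
  intro a ha b hb hab
  rw [SimpleGraph.Walk.toSubgraph_reverse]
  rw [SimpleGraph.Walk.support_reverse, List.mem_reverse] at ha hb
  exact hW.2 a ha b hb hab

lemma mem_internals_reverse {u v : V} {W : G.Walk u v} (hp : W.IsPath) (hlen : 1 ≤ W.length)
    {x : V} (hx : x ∈ internals W.reverse) : x ∈ internals W := by
  rw [mem_internals_iff hp.reverse (by rwa [SimpleGraph.Walk.length_reverse])] at hx
  obtain ⟨i, h0, hik, hgi⟩ := hx
  rw [SimpleGraph.Walk.length_reverse] at hik
  rw [SimpleGraph.Walk.getVert_reverse] at hgi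
  exact (mem_internals_iff hp hlen).2 ⟨W.length - i, by omega, by omega, hgi⟩

end Helpers

section MainAux
variable {V : Type*} {G : SimpleGraph V}

lemma aux_first_internal
    (hhole : ¬ HasHole G) (hD : IsEmpty (dominoGraph ↪g G)) (hF : IsEmpty (fGraph ↪g G))
    (hX : IsEmpty (x5Graph ↪g G)) {u v a b : V} (W : G.Walk u v)
    (hW : IsInducedPath G W) (h3 : 3 ≤ W.length) (huv : ¬ G.Adj u v)
    (hau : G.Adj u a) (hab : G.Adj a b) (hbv : G.Adj b v)
    (hav : ¬ G.Adj a v) (hbu : ¬ G.Adj u b) :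
    a ∈ W.support ∨ ∃ y ∈ internals W, G.Adj a y := by
  classical
  by_contra hcon
  push_neg at hcon
  obtain ⟨haW, hano⟩ := hcon
  set k := W.length with hk
  set p : ℕ → V := fun i => W.getVert i with hp
  have hp0 : p 0 = u := W.getVert_zero
  have hpk : p k = v := W.getVert_length
  have hadjp : ∀ i, i < k → G.Adj (p i) (p (i+1)) := fun i hi => W.adj_getVert_succ hi
  have hinjp : ∀ i j, i ≤ k → j ≤ k → p i = p j → i = j :=
    fun i j hi hj h => getVert_inj hW.1 hi hj h
  have hpne : ∀ i j, i ≤ k → j ≤ k → i ≠ j → p i ≠ p j :=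
    fun i j hi hj hne h => hne (hinjp i j hi hj h)
  have hnadjp : ∀ i j, i ≤ k → j ≤ k → j ≠ i+1 → i ≠ j+1 → ¬ G.Adj (p i) (p j) :=
    fun i j hi hj h1 h2 => induced_not_adj hW hi hj h1 h2
  have hmemp : ∀ i, i ≤ k → p i ∈ W.support :=
    fun i hi => SimpleGraph.Walk.mem_support_iff_exists_getVert.2 ⟨i, rfl, hi⟩
  have hanot : ∀ i, 0 < i → i < k → ¬ G.Adj a (p i) := by
    intro i h1 h2 h
    exact hano _ ((mem_internals_iff hW.1 (by omega)).2 ⟨i, h1, h2, rfl⟩) h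
  have hanotf : ∀ i, 0 < i → i ≤ k → ¬ G.Adj a (p i) := by
    intro i h1 h2
    rcases Nat.eq_or_lt_of_le h2 with h3 | h3
    · rw [h3, hpk]; exact hav
    · exact hanot i h1 h3
  have hanotp : ∀ i, i ≤ k → a ≠ p i := fun i hi h => haW (h ▸ hmemp i hi)
  have hbne_u : b ≠ u := fun h => huv (h ▸ hbv)
  by_cases hbW : b ∈ W.support
  · obtain ⟨i, hgi, hile⟩ := SimpleGraph.Walk.mem_support_iff_exists_getVert.1 hbW
    have hpib : p i = b := hgi
    have h0 : i ≠ 0 := fun h => hbne_u (by rw [← hpib, h, hp0])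
    have hik : i ≠ k := fun h => hbv.ne (by rw [← hpib, h, hpk])
    exact hanot i (by omega) (by omega) (hpib ▸ hab)
  · have hbnotp : ∀ i, i ≤ k → b ≠ p i := fun i hi h => hbW (h ▸ hmemp i hi)
    by_cases hbint : ∃ i, 0 < i ∧ i < k ∧ G.Adj b (p i)
    · obtain ⟨i0, ⟨hi0pos, hi0k, hbi0⟩, hmin1⟩ :
          ∃ m, (0 < m ∧ m < k ∧ G.Adj b (p m)) ∧
            ∀ l, l < m → ¬(0 < l ∧ l < k ∧ G.Adj b (p l)) :=
        ⟨Nat.find hbint, Nat.find_spec hbint, fun l hl => Nat.find_min hbint hl⟩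
      by_cases h2i : 2 ≤ i0
      · -- hole u a b p_{i0} … p_1
        apply hhole
        refine hole_seg2 p i0 b a h2i (fun i hi => hadjp i (by omega)) hbi0.symm hab.symm ?_
          (fun i j hi hj h => hinjp i j (by omega) (by omega) h)
          (fun i hi => hbnotp i (by omega)) (fun i hi => hanotp i (by omega)) hab.ne' ?_ ?_
          (fun i h0 hi => hanot i h0 (by omega))
        · rw [hp0]; exact hau.symm
        · intro i j hij hj h
          by_contra hne
          exact hnadjp i j (by omega) (by omega) hne (by omega) h
        · intro i hi
          rcases Nat.eq_zero_or_pos i with h0 | h0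
          · rw [h0, hp0]; exact fun h => hbu h.symm
          · exact fun h => hmin1 i (by omega) ⟨h0, by omega, h⟩
      · have hi01 : i0 = 1 := by omega
        have hb1 : G.Adj b (p 1) := by rwa [hi01] at hbi0
        have hP2 : ∃ l, 2 ≤ l ∧ l ≤ k ∧ G.Adj b (p l) :=
          ⟨k, by omega, le_refl _, by rw [hpk]; exact hbv⟩
        obtain ⟨m, ⟨hm2, hmk, hbm⟩, hmin2⟩ :
            ∃ m, (2 ≤ m ∧ m ≤ k ∧ G.Adj b (p m)) ∧
              ∀ l, l < m → ¬(2 ≤ l ∧ l ≤ k ∧ G.Adj b (p l)) :=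
          ⟨Nat.find hP2, Nat.find_spec hP2, fun l hl => Nat.find_min hP2 hl⟩
        by_cases hm4 : 4 ≤ m
        · -- hole b p1 … pm
          apply hhole
          refine hole_seg1 p 1 m b (by omega) (fun i h1 h2 => hadjp i (by omega)) hb1 hbm.symm
            (fun i j hi1 hik hj1 hjk h => hinjp i j (by omega) (by omega) h)
            (fun i h1 h2 => hbnotp i (by omega)) ?_ ?_
          · intro i j h1 hij hj h
            by_contra hne
            exact hnadjp i j (by omega) (by omega) hne (by omega) h
          · exact fun i h1 h2 h => hmin2 i (by omega) ⟨by omega, by omega, h⟩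
        · rcases (by omega : m = 2 ∨ m = 3) with hm | hm
          · -- m = 2
            have hb2 : G.Adj b (p 2) := by rwa [hm] at hbm
            by_cases hb3 : G.Adj b (p 3)
            · -- X5 on (p3, p2, p1, u, a, b)
              refine no_x5 hX (p 3) (p 2) (p 1) u a b
                (e01 := (hadjp 2 (by omega)).symm)
                (e05 := hb3.symm)
                (e12 := (hadjp 1 (by omega)).symm)
                (e15 := hb2.symm)
                (e23 := by rw [← hp0]; exact (hadjp 0 (by omega)).symm)
                (e25 := hb1.symm)
                (e34 := hau)
                (e45 := hab)
                (n02 := hnadjp 3 1 (by omega) (by omega) (by omega) (by omega))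
                (n03 := by rw [← hp0]; exact hnadjp 3 0 (by omega) (by omega) (by omega) (by omega))
                (n04 := fun h => hanotf 3 (by omega) (by omega) h.symm)
                (n13 := by rw [← hp0]; exact hnadjp 2 0 (by omega) (by omega) (by omega) (by omega))
                (n14 := fun h => hanot 2 (by omega) (by omega) h.symm)
                (n24 := fun h => hanot 1 (by omega) (by omega) h.symm)
                (n35 := hbu)
                (d02 := hpne 3 1 (by omega) (by omega) (by omega))
                (d03 := by rw [← hp0]; exact hpne 3 0 (by omega) (by omega) (by omega))
                (d04 := fun h => hanotp 3 (by omega) h.symm)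
                (d13 := by rw [← hp0]; exact hpne 2 0 (by omega) (by omega) (by omega))
                (d14 := fun h => hanotp 2 (by omega) h.symm)
                (d24 := fun h => hanotp 1 (by omega) h.symm)
                (d35 := hbne_u.symm)
            · -- m' = least l ≥ 3 with b ~ p l
              have hk4 : 4 ≤ k := by
                by_contra hlt
                exact hb3 (by rw [show (3:ℕ) = k by omega, hpk]; exact hbv)
              have hP3 : ∃ l, 3 ≤ l ∧ l ≤ k ∧ G.Adj b (p l) :=
                ⟨k, by omega, le_refl _, by rw [hpk]; exact hbv⟩
              obtain ⟨m', ⟨hm'3, hm'k, hbm'⟩, hmin3⟩ :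
                  ∃ m, (3 ≤ m ∧ m ≤ k ∧ G.Adj b (p m)) ∧
                    ∀ l, l < m → ¬(3 ≤ l ∧ l ≤ k ∧ G.Adj b (p l)) :=
                ⟨Nat.find hP3, Nat.find_spec hP3, fun l hl => Nat.find_min hP3 hl⟩
              have hm'4 : 4 ≤ m' := by
                rcases Nat.eq_or_lt_of_le hm'3 with h | h
                · rw [← h] at hbm'; exact absurd hbm' hb3
                · omega
              by_cases hm5 : 5 ≤ m'
              · -- hole b p2 p3 … p_{m'}
                apply hhole
                refine hole_seg1 p 2 m' b (by omega) (fun i h1 h2 => hadjp i (by omega)) hb2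
                  hbm'.symm
                  (fun i j hi1 hik hj1 hjk h => hinjp i j (by omega) (by omega) h)
                  (fun i h1 h2 => hbnotp i (by omega)) ?_ ?_
                · intro i j h1 hij hj h
                  by_contra hne
                  exact hnadjp i j (by omega) (by omega) hne (by omega) h
                · exact fun i h1 h2 h => hmin3 i (by omega) ⟨by omega, by omega, h⟩
              · -- m' = 4 : F on (u, a, b, p4, p3, p2, p1)
                have hm'eq : m' = 4 := by omega
                have hb4 : G.Adj b (p 4) := by rwa [hm'eq] at hbm'
                refine no_f hF u a b (p 4) (p 3) (p 2) (p 1)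
                  (e01 := hau)
                  (e06 := by rw [← hp0]; exact hadjp 0 (by omega))
                  (e12 := hab)
                  (e23 := hb4)
                  (e25 := hb2)
                  (e26 := hb1)
                  (e34 := (hadjp 3 (by omega)).symm)
                  (e45 := (hadjp 2 (by omega)).symm)
                  (e56 := (hadjp 1 (by omega)).symm)
                  (n02 := hbu)
                  (n03 := by rw [← hp0]; exact hnadjp 0 4 (by omega) (by omega) (by omega) (by omega))
                  (n04 := by rw [← hp0]; exact hnadjp 0 3 (by omega) (by omega) (by omega) (by omega))
                  (n05 := by rw [← hp0]; exact hnadjp 0 2 (by omega) (by omega) (by omega) (by omega))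
                  (n13 := hanotf 4 (by omega) (by omega))
                  (n14 := hanot 3 (by omega) (by omega))
                  (n15 := hanot 2 (by omega) (by omega))
                  (n16 := hanot 1 (by omega) (by omega))
                  (n24 := hb3)
                  (n35 := hnadjp 4 2 (by omega) (by omega) (by omega) (by omega))
                  (n36 := hnadjp 4 1 (by omega) (by omega) (by omega) (by omega))
                  (n46 := hnadjp 3 1 (by omega) (by omega) (by omega) (by omega))
                  (d02 := hbne_u.symm)
                  (d03 := by rw [← hp0]; exact hpne 0 4 (by omega) (by omega) (by omega))
                  (d04 := by rw [← hp0]; exact hpne 0 3 (by omega) (by omega) (by omega))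
                  (d05 := by rw [← hp0]; exact hpne 0 2 (by omega) (by omega) (by omega))
                  (d13 := fun h => hanotp 4 (by omega) h)
                  (d14 := fun h => hanotp 3 (by omega) h)
                  (d15 := fun h => hanotp 2 (by omega) h)
                  (d16 := fun h => hanotp 1 (by omega) h)
                  (d24 := fun h => hbnotp 3 (by omega) h)
                  (d35 := hpne 4 2 (by omega) (by omega) (by omega))
                  (d36 := hpne 4 1 (by omega) (by omega) (by omega))
                  (d46 := hpne 3 1 (by omega) (by omega) (by omega))
          · -- m = 3 : domino on (u, p1, p2, p3, b, a)
            have hb3' : G.Adj b (p 3) := by rwa [hm] at hbm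
            refine no_domino hD u (p 1) (p 2) (p 3) b a
              (e01 := by rw [← hp0]; exact hadjp 0 (by omega))
              (e05 := hau)
              (e12 := hadjp 1 (by omega))
              (e14 := hb1.symm)
              (e23 := hadjp 2 (by omega))
              (e34 := hb3'.symm)
              (e45 := hab.symm)
              (n02 := by rw [← hp0]; exact hnadjp 0 2 (by omega) (by omega) (by omega) (by omega))
              (n03 := by rw [← hp0]; exact hnadjp 0 3 (by omega) (by omega) (by omega) (by omega))
              (n04 := hbu)
              (n13 := hnadjp 1 3 (by omega) (by omega) (by omega) (by omega))
              (n15 := fun h => hanot 1 (by omega) (by omega) h.symm)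
              (n24 := fun h => hmin2 2 (by omega) ⟨le_refl _, by omega, h.symm⟩)
              (n25 := fun h => hanot 2 (by omega) (by omega) h.symm)
              (n35 := fun h => hanotf 3 (by omega) (by omega) h.symm)
              (d02 := by rw [← hp0]; exact hpne 0 2 (by omega) (by omega) (by omega))
              (d03 := by rw [← hp0]; exact hpne 0 3 (by omega) (by omega) (by omega))
              (d04 := hbne_u.symm)
              (d13 := hpne 1 3 (by omega) (by omega) (by omega))
              (d15 := fun h => hanotp 1 (by omega) h.symm)
              (d24 := fun h => hbnotp 2 (by omega) h.symm)
              (d25 := fun h => hanotp 2 (by omega) h.symm)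
              (d35 := fun h => hanotp 3 (by omega) h.symm)
    · -- b has no internal neighbour: hole u p1 … p_{k-1} v b a
      push_neg at hbint
      apply hhole
      refine hole_seg2 p k b a (by omega) (fun i hi => hadjp i hi) ?_ hab.symm ?_ hinjp
        hbnotp hanotp hab.ne' ?_ ?_ hanotf
      · rw [hpk]; exact hbv.symm
      · rw [hp0]; exact hau.symm
      · intro i j hij hj h
        by_contra hne
        exact hnadjp i j (by omega) (by omega) hne (by omega) h
      · intro i hi
        rcases Nat.eq_zero_or_pos i with h0 | h0
        · rw [h0, hp0]; exact fun h => hbu h.symm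
        · exact fun h => hbint i h0 hi h


lemma aux_mid_internal (hhole : ¬ HasHole G) {u v c : V} (W : G.Walk u v)
    (hW : IsInducedPath G W) (h3 : 3 ≤ W.length)
    (huc : G.Adj u c) (hcv : G.Adj c v) :
    c ∈ W.support ∨ ∃ y ∈ internals W, G.Adj c y := by
  classical
  by_contra hcon
  push_neg at hcon
  obtain ⟨hcW, hcno⟩ := hcon
  set k := W.length with hk
  set p : ℕ → V := fun i => W.getVert i with hp
  have hp0 : p 0 = u := W.getVert_zero
  have hpk : p k = v := W.getVert_length
  have hadjp : ∀ i, i < k → G.Adj (p i) (p (i+1)) := fun i hi => W.adj_getVert_succ hi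
  have hinjp : ∀ i j, i ≤ k → j ≤ k → p i = p j → i = j :=
    fun i j hi hj h => getVert_inj hW.1 hi hj h
  have hnadjp : ∀ i j, i ≤ k → j ≤ k → j ≠ i+1 → i ≠ j+1 → ¬ G.Adj (p i) (p j) :=
    fun i j hi hj h1 h2 => induced_not_adj hW hi hj h1 h2
  have hmemp : ∀ i, i ≤ k → p i ∈ W.support :=
    fun i hi => SimpleGraph.Walk.mem_support_iff_exists_getVert.2 ⟨i, rfl, hi⟩
  have hcnotp : ∀ i, i ≤ k → c ≠ p i := fun i hi h => hcW (h ▸ hmemp i hi)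
  apply hhole
  refine hole_seg1 p 0 k c (by omega) (fun i h1 h2 => hadjp i h2) ?_ ?_
    (fun i j hi1 hik hj1 hjk h => hinjp i j (by omega) (by omega) h)
    (fun i h1 h2 => hcnotp i (by omega)) ?_ ?_
  · rw [hp0]; exact huc.symm
  · rw [hpk]; exact hcv.symm
  · intro i j h1 hij hj h
    by_contra hne
    exact hnadjp i j (by omega) (by omega) hne (by omega) h
  · intro i h1 h2 h
    exact hcno _ ((mem_internals_iff hW.1 (by omega)).2 ⟨i, by omega, by omega, rfl⟩) h

end MainAux

theorem forbidden_free_m3_dominates_l3 {V : Type*} [Fintype V] (G : SimpleGraph V)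
    (hc : G.Connected) (hhole : ¬ HasHole G)
    (hD : IsEmpty (dominoGraph ↪g G)) (hF : IsEmpty (fGraph ↪g G))
    (hX : IsEmpty (x5Graph ↪g G))
    (u v : V) (huv : ¬ G.Adj u v) (W W' : G.Walk u v)
    (hW : IsInducedPath G W) (h3 : 3 ≤ W.length)
    (hW' : IsInducedPath G W') (h3' : W'.length ≤ 3) :
    Dominates G W W' := by
  intro x hx
  cases W' with
  | nil => simp [internals] at hx
  | cons h1 W2 =>
    cases W2 with
    | nil => simp [internals] at hx
    | cons h2 W3 =>
      rename_i c1 c2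
      cases W3 with
      | nil =>
        -- W' has length 2 with middle vertex c2
        simp only [internals, SimpleGraph.Walk.support_cons, SimpleGraph.Walk.support_nil,
          List.tail_cons, List.dropLast, List.mem_singleton] at hx
        subst hx
        exact aux_mid_internal hhole W hW h3 h1 h2
      | cons h3w W4 =>
        rename_i c3
        cases W4 with
        | cons h4 W5 =>
          exfalso
          simp only [SimpleGraph.Walk.length_cons] at h3'
          omega
        | nil =>
          -- W' = u :: c1 :: c2 :: v with h1 : Adj u c1, h2 : Adj c1 c2, h3w : Adj c2 v
          have hlen : (SimpleGraph.Walk.cons h1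
              (SimpleGraph.Walk.cons h2 (SimpleGraph.Walk.cons h3w SimpleGraph.Walk.nil))).length = 3 := rfl
          have hav : ¬ G.Adj c1 v := by
            have := induced_not_adj hW' (i := 1) (j := 3)
              (by rw [hlen]; omega) (by rw [hlen]) (by omega) (by omega)
            exact this
          have hbu : ¬ G.Adj u c2 := by
            have := induced_not_adj hW' (i := 0) (j := 2)
              (by rw [hlen]; omega) (by rw [hlen]; omega) (by omega) (by omega)
            exact this
          simp only [internals, SimpleGraph.Walk.support_cons, SimpleGraph.Walk.support_nil,
            List.tail_cons, List.dropLast, List.mem_cons, List.mem_singleton] at hx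
          rcases hx with rfl | hx
          · exact aux_first_internal hhole hD hF hX W hW h3 huv h1 h2 h3w hav hbu
          · rcases hx with rfl | hfalse
            · have hres := aux_first_internal hhole hD hF hX W.reverse (induced_reverse hW)
                (by rwa [SimpleGraph.Walk.length_reverse]) (fun h => huv h.symm)
                h3w.symm h2.symm h1.symm (fun h => hbu h.symm) (fun h => hav h.symm)
              rcases hres with hl | ⟨y, hy, hadj⟩
              · left
                rwa [SimpleGraph.Walk.support_reverse, List.mem_reverse] at hl
              · exact Or.inr ⟨y, mem_internals_reverse hW.1 (by omega) hy, hadj⟩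
            · simp at hfalse
end

section
/- Let G be a finite simple connected graph that is HHD-free (no induced house, hole, or domino). Then for every pair of non-adjacent vertices u, v, every uv-path of length 2 dominates every induced uv-path of length at least 3. -/
set_option maxHeartbeats 1000000

open SimpleGraph

section Aux

variable {V : Type*} {G : SimpleGraph V}

lemma house_aux (hhouse : IsEmpty (houseGraph ↪g G))
    (p q r s t : V)
    (hpq : G.Adj p q) (hqr : G.Adj q r) (hrs : G.Adj r s) (hst : G.Adj s t)
    (htp : G.Adj t p) (hqt : G.Adj q t)
    (hpr : ¬ G.Adj p r) (hps : ¬ G.Adj p s) (hqs : ¬ G.Adj q s) (hrt : ¬ G.Adj r t) :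
    False := by
  have h2 : p ≠ r := by rintro rfl; exact hrt htp.symm
  have h3 : p ≠ s := by rintro rfl; exact hqs hpq.symm
  have h6 : q ≠ s := by rintro rfl; exact hps hpq
  have h9 : r ≠ t := by rintro rfl; exact hpr htp.symm
  apply hhouse.false
  refine ⟨⟨![p,q,r,s,t], ?_⟩, ?_⟩
  · intro a b hab
    fin_cases a <;> fin_cases b <;> simp only [Matrix.cons_val_zero, Matrix.cons_val_one,
      Matrix.head_cons, Matrix.cons_val_two, Matrix.tail_cons, Matrix.cons_val_three,
      Matrix.cons_val_four, Matrix.cons_val_fin_one] at hab <;>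
      first
        | rfl
        | exact absurd hab hpq.ne | exact absurd hab hpq.ne'
        | exact absurd hab hqr.ne | exact absurd hab hqr.ne'
        | exact absurd hab hrs.ne | exact absurd hab hrs.ne'
        | exact absurd hab hst.ne | exact absurd hab hst.ne'
        | exact absurd hab htp.ne | exact absurd hab htp.ne'
        | exact absurd hab hqt.ne | exact absurd hab hqt.ne'
        | exact absurd hab h2 | exact absurd hab h2.symm
        | exact absurd hab h3 | exact absurd hab h3.symm
        | exact absurd hab h6 | exact absurd hab h6.symm
        | exact absurd hab h9 | exact absurd hab h9.symm
  · intro a b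
    show G.Adj (![p,q,r,s,t] a) (![p,q,r,s,t] b) ↔ _
    fin_cases a <;> fin_cases b <;>
      simp only [Matrix.cons_val_zero, Matrix.cons_val_one, Matrix.head_cons,
        Matrix.cons_val_two, Matrix.tail_cons, Matrix.cons_val_three, Matrix.cons_val_four,
        Matrix.cons_val_fin_one, Fin.isValue] <;>
      constructor <;> intro h <;>
      first
        | exact (G.loopless _ h).elim
        | exact hpq | exact hqr | exact hrs | exact hst | exact htp | exact hqt
        | exact hpq.symm | exact hqr.symm | exact hrs.symm | exact hst.symm
        | exact htp.symm | exact hqt.symm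
        | exact (hpr h).elim | exact (hps h).elim | exact (hqs h).elim | exact (hrt h).elim
        | exact (hpr h.symm).elim | exact (hps h.symm).elim | exact (hqs h.symm).elim
        | exact (hrt h.symm).elim
        | (simp [houseGraph, Set.mem_insert_iff]; done)
        | exact absurd h (by simp [houseGraph, Set.mem_insert_iff, Sym2.eq, Sym2.rel_iff'])

lemma domino_aux (hD : IsEmpty (dominoGraph ↪g G))
    (p q r s t w : V)
    (hpq : G.Adj p q) (hqr : G.Adj q r) (hrs : G.Adj r s) (hst : G.Adj s t)
    (htw : G.Adj t w) (hwp : G.Adj w p) (hqt : G.Adj q t)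
    (hpr : ¬ G.Adj p r) (hps : ¬ G.Adj p s) (hpt : ¬ G.Adj p t) (hqs : ¬ G.Adj q s)
    (hqw : ¬ G.Adj q w) (hrt : ¬ G.Adj r t) (hrw : ¬ G.Adj r w) (hsw : ¬ G.Adj s w) :
    False := by
  have d1 : p ≠ r := by rintro rfl; exact hrw hwp.symm
  have d2 : p ≠ s := by rintro rfl; exact hqs hpq.symm
  have d3 : p ≠ t := by rintro rfl; exact hps hst.symm
  have d4 : q ≠ s := by rintro rfl; exact hps hpq
  have d5 : q ≠ w := by rintro rfl; exact hrw hqr.symm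
  have d6 : r ≠ t := by rintro rfl; exact hrw htw
  have d7 : r ≠ w := by rintro rfl; exact hpr hwp.symm
  have d8 : s ≠ w := by rintro rfl; exact hps hwp.symm
  apply hD.false
  let f : Fin 6 → V := fun i => match i with
    | 0 => p | 1 => q | 2 => r | 3 => s | 4 => t | 5 => w
  refine ⟨⟨f, ?_⟩, ?_⟩
  · intro a b hab
    fin_cases a <;> fin_cases b <;>
      first
        | rfl
        | exact absurd hab hpq.ne | exact absurd hab hpq.ne'
        | exact absurd hab hqr.ne | exact absurd hab hqr.ne'
        | exact absurd hab hrs.ne | exact absurd hab hrs.ne'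
        | exact absurd hab hst.ne | exact absurd hab hst.ne'
        | exact absurd hab htw.ne | exact absurd hab htw.ne'
        | exact absurd hab hwp.ne | exact absurd hab hwp.ne'
        | exact absurd hab hqt.ne | exact absurd hab hqt.ne'
        | exact absurd hab d1 | exact absurd hab d1.symm
        | exact absurd hab d2 | exact absurd hab d2.symm
        | exact absurd hab d3 | exact absurd hab d3.symm
        | exact absurd hab d4 | exact absurd hab d4.symm
        | exact absurd hab d5 | exact absurd hab d5.symm
        | exact absurd hab d6 | exact absurd hab d6.symm
        | exact absurd hab d7 | exact absurd hab d7.symm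
        | exact absurd hab d8 | exact absurd hab d8.symm
  · intro a b
    fin_cases a <;> fin_cases b <;>
      constructor <;> intro h <;>
      first
        | exact (G.loopless _ h).elim
        | exact hpq | exact hqr | exact hrs | exact hst | exact htw | exact hwp | exact hqt
        | exact hpq.symm | exact hqr.symm | exact hrs.symm | exact hst.symm
        | exact htw.symm | exact hwp.symm | exact hqt.symm
        | exact (hpr h).elim | exact (hps h).elim | exact (hpt h).elim | exact (hqs h).elim
        | exact (hqw h).elim | exact (hrt h).elim | exact (hrw h).elim | exact (hsw h).elim
        | exact (hpr h.symm).elim | exact (hps h.symm).elim | exact (hpt h.symm).elim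
        | exact (hqs h.symm).elim | exact (hqw h.symm).elim | exact (hrt h.symm).elim
        | exact (hrw h.symm).elim | exact (hsw h.symm).elim
        | (simp [dominoGraph, Set.mem_insert_iff]; done)
        | exact absurd h (by simp [dominoGraph, Set.mem_insert_iff, Sym2.eq, Sym2.rel_iff'])

/-- A walk following vertices `y a, y (a+1), ..., y (a+n)`. -/
def seg (G : SimpleGraph V) (y : ℕ → V) :
    (a n : ℕ) → (∀ j, j < n → G.Adj (y (a + j)) (y (a + j + 1))) → G.Walk (y a) (y (a + n))
  | _, 0, _ => Walk.nil
  | a, n+1, h => (seg G y a n (fun j hj => h j (by omega))).concat (h n (by omega))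

lemma seg_length (y : ℕ → V) (a n : ℕ) (h : ∀ j, j < n → G.Adj (y (a + j)) (y (a + j + 1))) :
    (seg G y a n h).length = n := by
  induction n with
  | zero => rfl
  | succ n ih => simp [seg, Walk.length_concat, ih]

lemma seg_getVert (y : ℕ → V) (a n : ℕ) (h : ∀ j, j < n → G.Adj (y (a + j)) (y (a + j + 1)))
    (i : ℕ) (hi : i ≤ n) : (seg G y a n h).getVert i = y (a + i) := by
  induction n with
  | zero => interval_cases i; simp [seg]
  | succ n ih =>
    rw [seg, Walk.concat_eq_append, Walk.getVert_append]
    rcases Nat.lt_or_ge i n with hlt | hge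
    · rw [if_pos (by rw [seg_length]; omega), ih _ (by omega)]
    · rw [if_neg (by rw [seg_length]; omega), seg_length]
      obtain hi' | hi' : i = n ∨ i = n + 1 := by omega
      · subst hi'; simp [Walk.getVert]
      · subst hi'; simp [Walk.getVert]

lemma seg_support (y : ℕ → V) (a n : ℕ) (h : ∀ j, j < n → G.Adj (y (a + j)) (y (a + j + 1))) :
    (seg G y a n h).support = (List.range (n+1)).map (fun j => y (a + j)) := by
  induction n with
  | zero => simp [seg, List.range_succ]
  | succ n ih => simp [seg, Walk.support_concat, ih, List.range_succ]

lemma hole_aux (hhole : ¬ HasHole G) (y : ℕ → V) (m : V) (k : ℕ)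
    (hadj : ∀ j, j < k → G.Adj (y j) (y (j+1)))
    (hinj : ∀ i, i ≤ k → ∀ j, j ≤ k → y i = y j → i = j)
    (hchord : ∀ i, i ≤ k → ∀ j, j ≤ k → G.Adj (y i) (y j) → j = i + 1 ∨ i = j + 1)
    (hm : ∀ i, i ≤ k → y i ≠ m)
    (a n : ℕ) (hn : 3 ≤ n) (hb : a + n ≤ k)
    (hma : G.Adj m (y a)) (hmb : G.Adj (y (a+n)) m)
    (hgap : ∀ j, a < j → j < a + n → ¬ G.Adj m (y j)) : False := by
  have hadjseg : ∀ j, j < n → G.Adj (y (a + j)) (y (a + j + 1)) :=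
    fun j hj => hadj (a+j) (by omega)
  set S : G.Walk (y a) (y (a+n)) := seg G y a n hadjseg with hS
  set p : G.Walk (y a) m := S.concat hmb with hp
  set c : G.Walk m m := Walk.cons hma p with hc
  have hSsup : S.support = (List.range (n+1)).map (fun j => y (a + j)) := seg_support ..
  have hSlen : S.length = n := seg_length ..
  have hlen : c.length = n + 2 := by
    rw [hc, Walk.length_cons, hp, Walk.length_concat, hSlen]
  have hmS : m ∉ S.support := by
    rw [hSsup]
    simp only [List.mem_map, List.mem_range, not_exists]
    rintro j ⟨hj, hyj⟩
    exact hm (a+j) (by omega) hyj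
  have hSnd : S.support.Nodup := by
    rw [hSsup]
    refine List.Nodup.map_on ?_ List.nodup_range
    intro i hi j hj hij
    simp only [List.mem_range] at hi hj
    have := hinj (a+i) (by omega) (a+j) (by omega) hij
    omega
  have hcyc : c.IsCycle := by
    rw [hc, Walk.cons_isCycle_iff]
    constructor
    · rw [Walk.isPath_def, hp, Walk.support_concat,
        List.nodup_append']
      exact ⟨hSnd, List.nodup_singleton _, fun x hx hx' => by
        simp only [List.mem_singleton] at hx'; subst hx'; exact hmS hx⟩
    · intro hmem
      rw [hp, Walk.edges_concat, List.concat_eq_append, List.mem_append] at hmem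
      rcases hmem with hmem | hmem
      · exact hmS (S.fst_mem_support_of_mem_edges hmem)
      · simp only [List.mem_singleton, Sym2.eq, Sym2.rel_iff', Prod.mk.injEq,
          Prod.swap_prod_mk] at hmem
        rcases hmem with ⟨h1, _⟩ | ⟨_, h2⟩
        · exact hm (a+n) (by omega) h1.symm
        · have := hinj a (by omega) (a+n) (by omega) h2
          omega
  have hpgv : ∀ i, i ≤ n → p.getVert i = y (a + i) := by
    intro i hi
    rw [hp, Walk.concat_eq_append, Walk.getVert_append]
    rcases Nat.lt_or_ge i n with hlt | hge
    · rw [if_pos (by rw [hSlen]; omega)]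
      exact seg_getVert y a n hadjseg i (by omega)
    · rw [if_neg (by rw [hSlen]; omega), hSlen]
      obtain hi' | hi' : i = n ∨ i = n + 1 := by omega
      · subst hi'; simp [Walk.getVert]
      · omega
  have hgv : ∀ i, i ≤ n → c.getVert (i+1) = y (a+i) := by
    intro i hi
    rw [hc, Walk.getVert_cons_succ]
    exact hpgv i hi
  have hgv0 : c.getVert 0 = m := Walk.getVert_zero c
  have hgvl : c.getVert (n+2) = m := by rw [← hlen]; exact Walk.getVert_length c
  have hmemc : ∀ x ∈ c.support, x = m ∨ ∃ j, j ≤ n ∧ x = y (a+j) := by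
    intro x hx
    rw [hc, Walk.support_cons] at hx
    rcases List.mem_cons.mp hx with h | h
    · exact Or.inl h
    · rw [hp, Walk.support_concat, List.mem_append] at h
      rcases h with h | h
      · rw [hSsup] at h
        simp only [List.mem_map, List.mem_range] at h
        obtain ⟨j, hj, hyj⟩ := h
        exact Or.inr ⟨j, by omega, hyj.symm⟩
      · simp only [List.mem_singleton] at h
        exact Or.inl h
  have key : ∀ j, j ≤ n → G.Adj m (y (a+j)) → c.toSubgraph.Adj m (y (a+j)) := by
    intro j hj hadjm
    rcases Nat.eq_zero_or_pos j with h0 | h0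
    · subst h0
      have := c.toSubgraph_adj_getVert (i := 0) (by omega)
      rwa [hgv0, hgv 0 (by omega)] at this
    rcases Nat.lt_or_ge j n with hjn | hjn
    · exact absurd hadjm (hgap (a+j) (by omega) (by omega))
    · have hj' : j = n := by omega
      rw [hj']
      have := c.toSubgraph_adj_getVert (i := n+1) (by omega)
      rw [hgv n (by omega)] at this
      rw [show n + 1 + 1 = n + 2 from rfl, hgvl] at this
      exact this.symm
  have keyy : ∀ i' j', i' ≤ n → j' ≤ n → G.Adj (y (a+i')) (y (a+j')) →
      c.toSubgraph.Adj (y (a+i')) (y (a+j')) := by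
    have step : ∀ i', i' + 1 ≤ n → c.toSubgraph.Adj (y (a+i')) (y (a+(i'+1))) := by
      intro i' hi'
      have := c.toSubgraph_adj_getVert (i := i'+1) (by omega)
      rwa [hgv i' (by omega), show i' + 1 + 1 = i' + 2 from rfl,
        hgv (i'+1) (by omega)] at this
    intro i' j' hi' hj' hadj'
    rcases hchord (a+i') (by omega) (a+j') (by omega) hadj' with hcons | hcons
    · have hj'' : j' = i' + 1 := by omega
      subst hj''
      exact step i' (by omega)
    · have hi'' : i' = j' + 1 := by omega
      subst hi''
      exact (step j' (by omega)).symm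
  apply hhole
  refine ⟨m, c, hcyc, by omega, ?_⟩
  intro x1 hx1 x2 hx2 h12
  rcases hmemc x1 hx1 with rfl | ⟨i', hi', rfl⟩ <;>
    rcases hmemc x2 hx2 with rfl | ⟨j', hj', rfl⟩
  · exact (G.loopless.irrefl _ h12).elim
  · exact key j' hj' h12
  · exact (key i' hi' h12.symm).symm
  · exact keyy i' j' hi' hj' h12

lemma path_getVert_inj {u v : V} {p : G.Walk u v} (hp : p.IsPath) :
    ∀ i, i ≤ p.length → ∀ j, j ≤ p.length → p.getVert i = p.getVert j → i = j := by
  induction p with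
  | nil => intro i hi j hj _; simp only [Walk.length_nil, Nat.le_zero] at hi hj; omega
  | @cons a b c h q ih =>
    rw [Walk.cons_isPath_iff] at hp
    intro i hi j hj heq
    rw [Walk.length_cons] at hi hj
    match i, j with
    | 0, 0 => rfl
    | 0, j+1 =>
      exfalso
      rw [Walk.getVert_zero, Walk.getVert_cons_succ] at heq
      exact hp.2 (Walk.mem_support_iff_exists_getVert.mpr ⟨j, heq.symm, by omega⟩)
    | i+1, 0 =>
      exfalso
      rw [Walk.getVert_zero, Walk.getVert_cons_succ] at heq
      exact hp.2 (Walk.mem_support_iff_exists_getVert.mpr ⟨i, heq, by omega⟩)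
    | i+1, j+1 =>
      rw [Walk.getVert_cons_succ, Walk.getVert_cons_succ] at heq
      have := ih hp.1 i (by omega) j (by omega) heq
      omega

end Aux

theorem hhdFree_l2_dominates_m3 {V : Type*} [Fintype V] (G : SimpleGraph V)
    (hc : G.Connected) (hhouse : IsEmpty (houseGraph ↪g G))
    (hhole : ¬ HasHole G) (hD : IsEmpty (dominoGraph ↪g G))
    (u v : V) (huv : ¬ G.Adj u v) (W W' : G.Walk u v)
    (hW : W.IsPath) (h2 : W.length = 2)
    (hW' : IsInducedPath G W') (h3 : 3 ≤ W'.length) :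
    Dominates G W W' := by
  classical
  -- destructure W into u - m - v
  cases W with
  | nil => simp at h2
  | cons h1 q =>
  rename_i m
  cases q with
  | nil => simp at h2
  | cons h2' q2 =>
  cases q2 with
  | cons h3' q3 => simp only [Walk.length_cons] at h2; omega
  | nil =>
  intro x hx
  have hx' : x ∈ W'.support.tail.dropLast := hx
  -- basic facts about W'
  set k := W'.length with hk
  set y : ℕ → V := fun i => W'.getVert i with hy
  have hy0 : y 0 = u := W'.getVert_zero
  have hyk : y k = v := W'.getVert_length
  have hum : G.Adj u m := h1
  have hmv : G.Adj m v := h2'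
  have hadjW' : ∀ j, j < k → G.Adj (y j) (y (j+1)) := fun j hj => W'.adj_getVert_succ hj
  have hinj : ∀ i, i ≤ k → ∀ j, j ≤ k → y i = y j → i = j :=
    fun i hi j hj => path_getVert_inj hW'.1 i hi j hj
  have hmemsup : ∀ i, i ≤ k → y i ∈ W'.support :=
    fun i hi => Walk.mem_support_iff_exists_getVert.mpr ⟨i, rfl, hi⟩
  have hchord : ∀ i, i ≤ k → ∀ j, j ≤ k → G.Adj (y i) (y j) → j = i + 1 ∨ i = j + 1 := by
    intro i hi j hj hadj
    have := hW'.2 (y i) (hmemsup i hi) (y j) (hmemsup j hj) hadj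
    rw [Walk.toSubgraph_adj_iff] at this
    obtain ⟨t, hts, htl⟩ := this
    simp only [Sym2.eq, Sym2.rel_iff', Prod.mk.injEq, Prod.swap_prod_mk] at hts
    rcases hts with ⟨e1, e2⟩ | ⟨e1, e2⟩
    · have t1 := hinj t (by omega) i hi e1
      have t2 := hinj (t+1) (by omega) j hj e2
      omega
    · have t1 := hinj t (by omega) j hj e1
      have t2 := hinj (t+1) (by omega) i hi e2
      omega
  have hnonadj : ∀ i j, i ≤ k → j ≤ k → j ≠ i + 1 → i ≠ j + 1 → ¬ G.Adj (y i) (y j) := by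
    intro i j hi hj hne1 hne2 hadj
    rcases hchord i hi j hj hadj with h | h <;> omega
  have hmnot : ∀ i, i ≤ k → y i ≠ m := by
    intro i hi heq
    have hadj0 : G.Adj (y 0) (y i) := by rw [hy0, heq]; exact hum
    have hadjk : G.Adj (y i) (y k) := by rw [hyk, heq]; exact hmv
    have c1 := hchord 0 (by omega) i hi hadj0
    have c2 := hchord i hi k (by omega) hadjk
    omega
  have hP0 : G.Adj m (y 0) := by rw [hy0]; exact hum.symm
  have hPk : G.Adj m (y k) := by rw [hyk]; exact hmv
  -- the gap lemma: around any non-neighbor of m, both neighbors on the path see m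
  have gaplem : ∀ i, 0 < i → i < k → ¬ G.Adj m (y i) →
      G.Adj m (y (i-1)) ∧ G.Adj m (y (i+1)) := by
    intro i h0 hik hPi
    set a := Nat.findGreatest (fun j => G.Adj m (y j)) (i-1) with ha
    have hPa : G.Adj m (y a) :=
      Nat.findGreatest_spec (P := fun j => G.Adj m (y j)) (Nat.zero_le _) hP0
    have ha_le : a ≤ i - 1 := Nat.findGreatest_le (P := fun j => G.Adj m (y j)) _
    have hamax : ∀ j, a < j → j ≤ i - 1 → ¬ G.Adj m (y j) :=
      fun j hj hj' => Nat.findGreatest_is_greatest (P := fun j => G.Adj m (y j)) hj hj'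
    have hex : ∃ j, G.Adj m (y (i + 1 + j)) :=
      ⟨k - (i+1), by rw [show i+1+(k-(i+1)) = k by omega]; exact hPk⟩
    set b := i + 1 + Nat.find hex with hbdef
    have hPb : G.Adj m (y b) := Nat.find_spec hex
    have hbk : b ≤ k := by
      have := Nat.find_min' hex (m := k - (i+1))
        (by rw [show i+1+(k-(i+1)) = k by omega]; exact hPk)
      omega
    have hbmin : ∀ j, i < j → j < b → ¬ G.Adj m (y j) := by
      intro j hj1 hj2 hadjj
      have : j - (i+1) < Nat.find hex := by omega
      exact Nat.find_min hex this (by rw [show i+1+(j-(i+1)) = j by omega]; exact hadjj)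
    have hgap : ∀ j, a < j → j < b → ¬ G.Adj m (y j) := by
      intro j hj1 hj2
      rcases lt_trichotomy j i with h | h | h
      · exact hamax j hj1 (by omega)
      · subst h; exact hPi
      · exact hbmin j h hj2
    have hble : b ≤ a + 2 := by
      by_contra hgt
      exact hole_aux hhole y m k hadjW' hinj hchord hmnot a (b - a) (by omega) (by omega)
        hPa (by rw [show a + (b-a) = b by omega]; exact hPb.symm)
        (by intro j hj1 hj2; exact hgap j hj1 (by omega))
    have hai : a = i - 1 := by omega
    have hbi : b = i + 1 := by omega
    exact ⟨by rw [← hai]; exact hPa, by rw [← hbi]; exact hPb⟩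
  -- extract the index of x
  have hxsup : x ∈ W'.support :=
    List.mem_of_mem_tail (List.mem_of_mem_dropLast hx')
  obtain ⟨i, hyi, hik⟩ := Walk.mem_support_iff_exists_getVert.mp hxsup
  have hxu : x ≠ u := by
    intro heq
    have hnd : W'.support.Nodup := hW'.1.2
    rw [W'.support_eq_cons] at hnd
    rcases List.nodup_cons.mp hnd with ⟨hnmem, _⟩
    rw [heq] at hx'
    exact hnmem (List.mem_of_mem_dropLast hx')
  have hxv : x ≠ v := by
    intro heq
    have hnd : W'.support.Nodup := hW'.1.2
    have htne : W'.support.tail ≠ [] := by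
      intro hnil
      have := congrArg List.length (W'.support_eq_cons)
      rw [hnil] at this
      simp only [List.length_cons, List.length_nil] at this
      have := W'.length_support
      omega
    have hlast : W'.support.tail.getLast htne = v := by
      rw [List.getLast_tail]
      exact W'.getLast_support
    have hndt : W'.support.tail.Nodup := by
      rw [W'.support_eq_cons] at hnd
      exact (List.nodup_cons.mp hnd).2
    have hsplit := List.dropLast_append_getLast htne
    rw [← hsplit] at hndt
    rcases List.nodup_append'.mp hndt with ⟨_, _, hdisj⟩
    exact hdisj (show v ∈ W'.support.tail.dropLast by rw [heq] at hx'; exact hx') (by rw [hlast]; exact List.mem_singleton_self v)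
  have h0i : 0 < i := by
    rcases Nat.eq_zero_or_pos i with h | h
    · exfalso; apply hxu; rw [← hyi, h]; exact W'.getVert_zero
    · exact h
  have hikk : i < k := by
    rcases Nat.lt_or_ge i k with h | h
    · exact h
    · exfalso; apply hxv; rw [← hyi, show i = k by omega]; exact W'.getVert_length
  -- main claim: x = y i is adjacent to m
  have hclaim : G.Adj m (y i) := by
    by_contra hPi
    obtain ⟨hPl, hPr⟩ := gaplem i h0i hikk hPi
    rcases Nat.lt_or_ge i 2 with hi2 | hi2
    · -- i = 1 : work on the right side
      have hi1 : i = 1 := by omega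
      have hik2 : i + 2 ≤ k := by
        rcases Nat.lt_or_ge (i+1) k with h | h
        · omega
        · exfalso
          have : i + 1 = k := by omega
          apply hPi
          have h1k := hPk
          rw [← this] at h1k
          exfalso
          -- k = i+1 means k = 2, contradicting 3 ≤ k
          omega
      by_cases hP2 : G.Adj m (y (i+2))
      · -- house on y(i+2), y(i+1), y i, y(i-1), m
        exact house_aux hhouse (y (i+2)) (y (i+1)) (y i) (y (i-1)) m
          (hadjW' (i+1) (by omega)).symm
          (hadjW' i (by omega)).symm
          (by have := (hadjW' (i-1) (by omega)).symm; rwa [show i-1+1 = i by omega] at this)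
          hPl.symm.symm.symm
          hP2
          hPr.symm
          (hnonadj (i+2) i (by omega) (by omega) (by omega) (by omega))
          (hnonadj (i+2) (i-1) (by omega) (by omega) (by omega) (by omega))
          (hnonadj (i+1) (i-1) (by omega) (by omega) (by omega) (by omega))
          (fun h => hPi h.symm)
      · -- domino on y i .. y(i+3), m, y(i-1)
        have hik2' : i + 2 < k := by
          rcases Nat.lt_or_ge (i+2) k with h | h
          · exact h
          · exfalso; apply hP2; rw [show i+2 = k by omega]; exact hPk
        obtain ⟨_, hP3⟩ := gaplem (i+2) (by omega) hik2' hP2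
        rw [show i+2+1 = i+3 by omega] at hP3
        exact domino_aux hD (y i) (y (i+1)) (y (i+2)) (y (i+3)) m (y (i-1))
          (hadjW' i (by omega))
          (hadjW' (i+1) (by omega))
          (by have := hadjW' (i+2) (by omega); rwa [show i+2+1 = i+3 by omega] at this)
          hP3.symm
          hPl
          (by have := hadjW' (i-1) (by omega); rwa [show i-1+1 = i by omega] at this)
          hPr.symm
          (hnonadj i (i+2) (by omega) (by omega) (by omega) (by omega))
          (hnonadj i (i+3) (by omega) (by omega) (by omega) (by omega))
          (fun h => hPi h.symm)
          (hnonadj (i+1) (i+3) (by omega) (by omega) (by omega) (by omega))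
          (hnonadj (i+1) (i-1) (by omega) (by omega) (by omega) (by omega))
          (fun h => hP2 h.symm)
          (hnonadj (i+2) (i-1) (by omega) (by omega) (by omega) (by omega))
          (hnonadj (i+3) (i-1) (by omega) (by omega) (by omega) (by omega))
    · -- i ≥ 2 : work on the left side
      by_cases hP2 : G.Adj m (y (i-2))
      · -- house on y(i-2), y(i-1), y i, y(i+1), m
        exact house_aux hhouse (y (i-2)) (y (i-1)) (y i) (y (i+1)) m
          (by have := hadjW' (i-2) (by omega); rwa [show i-2+1 = i-1 by omega] at this)
          (by have := hadjW' (i-1) (by omega); rwa [show i-1+1 = i by omega] at this)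
          (hadjW' i (by omega))
          hPr.symm
          hP2
          hPl.symm
          (hnonadj (i-2) i (by omega) (by omega) (by omega) (by omega))
          (hnonadj (i-2) (i+1) (by omega) (by omega) (by omega) (by omega))
          (hnonadj (i-1) (i+1) (by omega) (by omega) (by omega) (by omega))
          (fun h => hPi h.symm)
      · -- domino on y i, y(i-1), y(i-2), y(i-3), m, y(i+1)
        have hi3 : 3 ≤ i := by
          rcases Nat.lt_or_ge i 3 with h | h
          · exfalso; apply hP2; rw [show i-2 = 0 by omega]; exact hP0
          · exact h
        obtain ⟨hP3, _⟩ := gaplem (i-2) (by omega) (by omega) hP2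
        rw [show i-2-1 = i-3 by omega] at hP3
        exact domino_aux hD (y i) (y (i-1)) (y (i-2)) (y (i-3)) m (y (i+1))
          (by have := (hadjW' (i-1) (by omega)).symm; rwa [show i-1+1 = i by omega] at this)
          (by have := (hadjW' (i-2) (by omega)).symm; rwa [show i-2+1 = i-1 by omega] at this)
          (by have := (hadjW' (i-3) (by omega)).symm; rwa [show i-3+1 = i-2 by omega] at this)
          hP3.symm
          hPr
          (hadjW' i (by omega)).symm
          hPl.symm
          (hnonadj i (i-2) (by omega) (by omega) (by omega) (by omega))
          (hnonadj i (i-3) (by omega) (by omega) (by omega) (by omega))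
          (fun h => hPi h.symm)
          (hnonadj (i-1) (i-3) (by omega) (by omega) (by omega) (by omega))
          (hnonadj (i-1) (i+1) (by omega) (by omega) (by omega) (by omega))
          (fun h => hP2 h.symm)
          (hnonadj (i-2) (i+1) (by omega) (by omega) (by omega) (by omega))
          (hnonadj (i-3) (i+1) (by omega) (by omega) (by omega) (by omega))
  -- conclude
  right
  refine ⟨m, ?_, ?_⟩
  · simp [internals, Walk.support_cons]
  · rw [← hyi]; exact hclaim.symm
end

section
/- If a finite simple connected graph G contains an induced house, hole, or domino, then there exist non-adjacent vertices u, v, a uv-path W of length 2, and an induced uv-path W' of length at least 3, such that W does not dominate W'. -/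
open SimpleGraph

namespace SimpleGraph

variable {V V' : Type*} {G : SimpleGraph V} {H : SimpleGraph V'}

def HasUndominatedInducedPath (G : SimpleGraph V) : Prop :=
  ∃ u v : V, ¬ G.Adj u v ∧ ∃ (W W' : G.Walk u v),
    W.IsPath ∧ W.length = 2 ∧ IsInducedPath G W' ∧ 3 ≤ W'.length ∧ ¬ Dominates G W W'

namespace Walk

variable {u v w x : V}

theorem isChordless_iff_forall_adj_toSubgraph {p : G.Walk u v} :
    p.IsChordless ↔
      ∀ a ∈ p.support, ∀ b ∈ p.support, G.Adj a b → p.toSubgraph.Adj a b := by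
  simp only [isChordless_iff_forall_mem_edges, adj_toSubgraph_iff_mem_edges]
  exact ⟨fun h a ha b hb ↦ h ha hb, fun h a b ha hb ↦ h a ha b hb⟩

theorem isInducedPath_iff {p : G.Walk u v} : IsInducedPath G p ↔ p.IsPath ∧ p.IsChordless := by
  rw [IsInducedPath, isChordless_iff_forall_adj_toSubgraph]

theorem IsChordless.of_cons_cons {h : G.Adj u v} {h' : G.Adj v w} {q : G.Walk w x}
    (hc : (cons h (cons h' q)).IsChordless) (hv : v ∉ q.support) : q.IsChordless := by
  rw [isChordless_iff_forall_mem_edges] at hc ⊢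
  intro a b ha hb hab
  have hav : a ≠ v := fun h ↦ hv (h ▸ ha)
  have hbv : b ≠ v := fun h ↦ hv (h ▸ hb)
  simpa [hav, hbv] using hc (by simp [ha]) (by simp [hb]) hab

theorem IsChordless.map {a b : V'} {p : H.Walk a b} (f : H ↪g G) (hp : p.IsChordless) :
    (p.map f.toHom).IsChordless := by
  rw [isChordless_iff_forall_mem_edges] at hp ⊢
  simp only [support_map, List.mem_map, edges_map]
  rintro _ _ ⟨a, ha, rfl⟩ ⟨b, hb, rfl⟩ hab
  exact ⟨_, hp ha hb (f.map_adj_iff.mp hab), rfl⟩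

theorem IsCycle.eq_or_eq_of_adj_getVert {c : G.Walk u u} (hc : c.IsCycle) (hch : c.IsChordless)
    {i : ℕ} (hi0 : i ≠ 0) (hi : i < c.length) (hw : w ∈ c.support)
    (hadj : G.Adj (c.getVert i) w) : w = c.getVert (i - 1) ∨ w = c.getVert (i + 1) := by
  have : w ∈ c.toSubgraph.neighborSet (c.getVert i) :=
    adj_toSubgraph_iff_mem_edges.mpr (hch.mem_edges (c.getVert_mem_support i) hw hadj)
  simpa [hc.neighborSet_toSubgraph_internal hi0 hi] using this

theorem getVert_mem_internals (p : G.Walk u v) {i : ℕ} (hi0 : i ≠ 0) (hi : i < p.length) :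
    p.getVert i ∈ internals p := by
  rw [internals, List.mem_iff_getElem]
  refine ⟨i - 1, by simp; omega, ?_⟩
  rw [List.getElem_dropLast, List.getElem_tail, p.getVert_eq_support_getElem hi.le]
  congr 1
  omega

theorem IsPath.ne_of_mem_internals {p : G.Walk u v} (hp : p.IsPath) (hw : w ∈ internals p) :
    w ≠ u ∧ w ≠ v := by
  have hnd_tail := hp.support_nodup
  rw [← p.cons_tail_support] at hnd_tail
  have hnd_init := hp.support_nodup
  rw [← p.dropLast_support_concat, List.nodup_append] at hnd_init
  constructor
  · rintro rfl
    exact (List.nodup_cons.mp hnd_tail).1 (List.mem_of_mem_dropLast hw)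
  · exact hnd_init.2.2 w (List.mem_of_mem_tail (List.tail_dropLast ▸ hw)) v
      (List.mem_singleton_self v)

theorem IsPath.ne_of_length_ne_zero {p : G.Walk u v} (hp : p.IsPath) (h : p.length ≠ 0) :
    u ≠ v :=
  fun huv ↦ h (hp.nil_iff_eq.mpr huv).length_eq_zero

theorem internals_map {a b : V'} (f : H →g G) (p : H.Walk a b) :
    internals (p.map f) = (internals p).map f := by
  simp [internals, support_map, List.map_tail, List.map_dropLast]

end Walk

open Walk

theorem Dominates.of_map (f : H ↪g G) {u v : V'} {W W' : H.Walk u v}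
    (h : Dominates G (W.map f.toHom) (W'.map f.toHom)) : Dominates H W W' := by
  intro x hx
  rcases h (f x) (by rw [internals_map]; exact List.mem_map_of_mem hx) with hmem | ⟨_, hy, hadj⟩
  · simpa [support_map] using Or.inl hmem
  · obtain ⟨y, hyW, rfl⟩ := List.mem_map.mp (internals_map f.toHom W ▸ hy)
    exact Or.inr ⟨y, hyW, f.map_adj_iff.mp hadj⟩

theorem hasUndominatedInducedPath_of_not_adj {u m v w : V} (h1 : G.Adj u m) (h2 : G.Adj m v)
    (huv : ¬ G.Adj u v) (W' : G.Walk u v) (hW' : IsInducedPath G W') (hlen : 3 ≤ W'.length)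
    (hw : w ∈ internals W') (hwm : w ≠ m) (hadj : ¬ G.Adj w m) :
    G.HasUndominatedInducedPath := by
  obtain ⟨hwu, hwv⟩ := hW'.1.ne_of_mem_internals hw
  have huv' : u ≠ v := hW'.1.ne_of_length_ne_zero (by omega)
  refine ⟨u, v, huv, cons h1 (cons h2 nil), W', ?_, rfl, hW', hlen, fun hdom ↦ ?_⟩
  · simp [isPath_def, h1.ne, h2.ne, huv']
  · rcases hdom w hw with hmem | ⟨y, hy, hwy⟩
    · simp [hwu, hwm, hwv] at hmem
    · obtain rfl : y = m := by simpa [internals] using hy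
      exact hadj hwy

theorem HasUndominatedInducedPath.of_embedding (f : H ↪g G) (hH : H.HasUndominatedInducedPath) :
    G.HasUndominatedInducedPath := by
  obtain ⟨u, v, huv, W, W', hW, hWlen, hW', hW'len, hdom⟩ := hH
  rw [isInducedPath_iff] at hW'
  exact ⟨f u, f v, by simpa using huv, W.map f.toHom, W'.map f.toHom, hW.map f.injective,
    by simpa using hWlen, isInducedPath_iff.mpr ⟨hW'.1.map f.injective, hW'.2.map f⟩,
    by simpa using hW'len, fun h ↦ hdom (h.of_map f)⟩

end SimpleGraph

open Walk

theorem houseGraph_hasUndominatedInducedPath : houseGraph.HasUndominatedInducedPath := by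
  have h04 : houseGraph.Adj 0 4 := by simp [houseGraph]
  have h43 : houseGraph.Adj 4 3 := by simp [houseGraph]
  have h32 : houseGraph.Adj 3 2 := by simp [houseGraph]
  refine hasUndominatedInducedPath_of_not_adj (w := 3) (by simp [houseGraph] : houseGraph.Adj 0 1)
    (by simp [houseGraph]) (by simp [houseGraph]) (cons h04 (cons h43 (cons h32 nil))) ?_
    (by simp) (by simp [internals]) (by decide) (by simp [houseGraph])
  rw [isInducedPath_iff, isChordless_iff_forall_mem_edges]
  refine ⟨by simp [isPath_def], ?_⟩
  simp only [support_cons, support_nil, edges_cons, edges_nil]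
  simp only [houseGraph, fromEdgeSet_adj, Set.mem_insert_iff, Set.mem_singleton_iff]
  decide

theorem dominoGraph_hasUndominatedInducedPath : dominoGraph.HasUndominatedInducedPath := by
  have h05 : dominoGraph.Adj 0 5 := by simp [dominoGraph]
  have h54 : dominoGraph.Adj 5 4 := by simp [dominoGraph]
  have h43 : dominoGraph.Adj 4 3 := by simp [dominoGraph]
  have h32 : dominoGraph.Adj 3 2 := by simp [dominoGraph]
  refine hasUndominatedInducedPath_of_not_adj (w := 5)
    (by simp [dominoGraph] : dominoGraph.Adj 0 1) (by simp [dominoGraph]) (by simp [dominoGraph])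
    (cons h05 (cons h54 (cons h43 (cons h32 nil)))) ?_ (by simp) (by simp [internals]) (by decide)
    (by simp [dominoGraph])
  rw [isInducedPath_iff, isChordless_iff_forall_mem_edges]
  refine ⟨by simp [isPath_def], ?_⟩
  simp only [support_cons, support_nil, edges_cons, edges_nil]
  simp only [dominoGraph, fromEdgeSet_adj, Set.mem_insert_iff, Set.mem_singleton_iff]
  decide

theorem HasHole.hasUndominatedInducedPath {V : Type*} {G : SimpleGraph V} (h : HasHole G) :
    G.HasUndominatedInducedPath := by
  obtain ⟨x, c, hc, hlen, hch⟩ := h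
  rw [← isChordless_iff_forall_adj_toSubgraph] at hch
  rcases c with _ | ⟨h01, _ | ⟨h12, _ | ⟨h23, r⟩⟩⟩
  all_goals try simp at hlen
  rename_i b1 b2 b3
  have hnd := hc.support_nodup
  have hx := r.end_mem_support
  simp only [support_cons, List.tail_cons, List.nodup_cons, List.mem_cons, not_or] at hnd
  obtain ⟨⟨hb12, hb1r⟩, hb2r, -⟩ := hnd
  have hq : (cons h12 (cons h23 r)).IsPath := ((cons_isCycle_iff _ _).mp hc).1
  have hb13 : b1 ≠ b3 := fun h ↦ hb1r (h ▸ r.start_mem_support)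
  have hb23 : b2 ≠ b3 := fun h ↦ hb2r (h ▸ r.start_mem_support)
  have hxb1 : x ≠ b1 := fun h ↦ hb1r (h ▸ hx)
  have hxb3 : x ≠ b3 := (hq.of_cons.of_cons.ne_of_length_ne_zero (by omega)).symm
  have hb3b1 : ¬ G.Adj b3 b1 := fun hadj ↦ by
    simpa [hxb3.symm, hb23.symm] using
      hc.eq_or_eq_of_adj_getVert hch (i := 1) one_ne_zero (by simp) (by simp) hadj.symm
  have hb2x : ¬ G.Adj b2 x := fun hadj ↦ by
    simpa [hxb1, hxb3] using
      hc.eq_or_eq_of_adj_getVert hch (i := 2) two_ne_zero (by simp) (by simp) hadj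
  refine hasUndominatedInducedPath_of_not_adj h12.symm h01.symm hb2x (cons h23 r)
    (isInducedPath_iff.mpr ⟨hq.of_cons, hch.of_cons_cons (by simpa using ⟨hb12, hb1r⟩)⟩)
    (by simp at hlen ⊢; omega) (w := b3) ?_ hb13.symm hb3b1
  simpa using (cons h23 r).getVert_mem_internals (i := 1) one_ne_zero (by simp; omega)

theorem hhd_l2_m3_fails_general {V : Type*} (G : SimpleGraph V)
    (h : Nonempty (houseGraph ↪g G) ∨ HasHole G ∨ Nonempty (dominoGraph ↪g G)) :
    ∃ u v : V, ¬ G.Adj u v ∧ ∃ (W W' : G.Walk u v),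
      W.IsPath ∧ W.length = 2 ∧
      IsInducedPath G W' ∧ 3 ≤ W'.length ∧
      ¬ Dominates G W W' := by
  rcases h with ⟨⟨f⟩⟩ | hhole | ⟨⟨f⟩⟩
  · exact houseGraph_hasUndominatedInducedPath.of_embedding f
  · exact hhole.hasUndominatedInducedPath
  · exact dominoGraph_hasUndominatedInducedPath.of_embedding f

theorem hhd_l2_m3_fails {V : Type*} [Fintype V] (G : SimpleGraph V)
    (hc : G.Connected)
    (h : Nonempty (houseGraph ↪g G) ∨ HasHole G ∨ Nonempty (dominoGraph ↪g G)) :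
    ∃ u v : V, ¬ G.Adj u v ∧ ∃ (W W' : G.Walk u v),
      W.IsPath ∧ W.length = 2 ∧
      IsInducedPath G W' ∧ 3 ≤ W'.length ∧
      ¬ Dominates G W W' :=
  hhd_l2_m3_fails_general G h
end

section
/- The class SP/m3 of graphs in which every shortest path between non-adjacent vertices dominates every induced path of length at least 3 between them coincides with the class l2/m3 in which every length-2 path between non-adjacent vertices dominates every such induced path. Moreover both classes contain the class W/m3 in which arbitrary uv-walks dominate m3-paths. -/
open SimpleGraph

namespace Helpers

variable {V : Type*} {G : SimpleGraph V}





theorem support_eq_map_getVert {u v : V} (W : G.Walk u v) :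
    W.support = (List.range (W.length + 1)).map W.getVert := by
  induction W with
  | nil => simp [SimpleGraph.Walk.getVert]
  | cons h q ih =>
    rw [SimpleGraph.Walk.support_cons, ih, SimpleGraph.Walk.length_cons,
      List.range_succ_eq_map (n := q.length + 1)]
    simp [List.map_map, Function.comp, SimpleGraph.Walk.getVert_cons_succ]

theorem mem_internals_iff {u v : V} {W : G.Walk u v} {x : V} :
    x ∈ internals W ↔ ∃ j, 0 < j ∧ j < W.length ∧ W.getVert j = x := by
  unfold internals
  rw [support_eq_map_getVert W]
  rw [List.range_succ_eq_map]
  simp only [List.map_cons, List.tail_cons]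
  rw [List.map_map]
  cases hl : W.length with
  | zero => simp
  | succ n =>
    rw [List.range_succ, List.map_append, List.map_singleton, List.dropLast_concat]
    simp only [List.mem_map, List.mem_range, Function.comp]
    constructor
    · rintro ⟨j, hj, rfl⟩
      exact ⟨j + 1, by omega, by omega, rfl⟩
    · rintro ⟨j, h1, h2, rfl⟩
      exact ⟨j - 1, by omega, by congr 1; omega⟩

theorem getVert_injOn {u v : V} {W : G.Walk u v} (hW : W.IsPath) {i j : ℕ}
    (hi : i ≤ W.length) (hj : j ≤ W.length) (h : W.getVert i = W.getVert j) : i = j := by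
  have hnd := hW.support_nodup
  rw [support_eq_map_getVert W] at hnd
  have := List.inj_on_of_nodup_map hnd (x := i) (y := j)
  simp only [List.mem_range] at this
  exact this (by omega) (by omega) h


theorem length_drop {u v : V} (W : G.Walk u v) (n : ℕ) :
    (W.drop n).length = W.length - n := by
  induction W generalizing n with
  | nil => cases n <;> simp [Walk.drop]
  | cons h q ih =>
    cases n with
    | zero => simp [Walk.drop]
    | succ n => simpa [Walk.drop] using ih n

theorem getVert_drop {u v : V} (W : G.Walk u v) (n i : ℕ) :
    (W.drop n).getVert i = W.getVert (n + i) := by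
  induction W generalizing n with
  | nil => cases n <;> simp [Walk.drop, Walk.getVert]
  | cons h q ih =>
    cases n with
    | zero => simp [Walk.drop]
    | succ n =>
      simp only [Walk.drop, Walk.getVert_copy, Walk.getVert_cons_succ]
      rw [ih n, Nat.succ_add]
      rfl

theorem support_drop {u v : V} (W : G.Walk u v) (n : ℕ) (hn : n ≤ W.length) :
    (W.drop n).support = W.support.drop n := by
  induction W generalizing n with
  | nil =>
    have hn0 : n = 0 := by simpa using hn
    subst hn0; rfl
  | cons h q ih =>
    cases n with
    | zero => simp [Walk.drop]
    | succ n =>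
      simp only [Walk.drop, Walk.support_copy, Walk.support_cons, List.drop_succ_cons]
      exact ih n (by simpa using hn)

def takeW {u v : V} : (W : G.Walk u v) → (n : ℕ) → G.Walk u (W.getVert n)
  | W, 0 => (Walk.nil).copy rfl (W.getVert_zero).symm
  | .nil, _+1 => .nil
  | .cons h q, (n+1) => Walk.cons h (takeW q n)

theorem length_takeW {u v : V} (W : G.Walk u v) (n : ℕ) (hn : n ≤ W.length) :
    (takeW W n).length = n := by
  induction W generalizing n with
  | nil =>
    have hn0 : n = 0 := by simpa using hn
    subst hn0; rfl
  | cons h q ih =>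
    cases n with
    | zero => rfl
    | succ n => simpa [takeW] using ih n (by simpa using hn)

theorem getVert_takeW {u v : V} (W : G.Walk u v) {n i : ℕ} (hi : i ≤ n) :
    (takeW W n).getVert i = W.getVert i := by
  induction W generalizing n i with
  | nil => cases n <;> simp [takeW, Walk.getVert_copy]
  | cons h q ih =>
    cases n with
    | zero =>
      have : i = 0 := by omega
      subst this; simp [takeW]
    | succ n =>
      cases i with
      | zero => simp [takeW]
      | succ i =>
        simp only [takeW, Walk.getVert_cons_succ]
        exact ih (by omega)

theorem support_takeW {u v : V} (W : G.Walk u v) (n : ℕ) (hn : n ≤ W.length) :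
    (takeW W n).support = W.support.take (n + 1) := by
  induction W generalizing n with
  | nil =>
    have hn0 : n = 0 := by simpa using hn
    subst hn0; rfl
  | cons h q ih =>
    cases n with
    | zero => simp [takeW]
    | succ n =>
      simp only [takeW, Walk.support_cons, List.take_succ_cons]
      exact congrArg (List.cons _) (ih n (by simpa using hn))


theorem isPath_drop {u v : V} {W : G.Walk u v} (hW : W.IsPath) {n : ℕ} (hn : n ≤ W.length) :
    (W.drop n).IsPath := by
  apply Walk.IsPath.mk'
  rw [support_drop W n hn]
  exact hW.support_nodup.sublist (List.drop_sublist _ _)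

theorem isPath_takeW {u v : V} {W : G.Walk u v} (hW : W.IsPath) {n : ℕ} (hn : n ≤ W.length) :
    (takeW W n).IsPath := by
  apply Walk.IsPath.mk'
  rw [support_takeW W n hn]
  exact hW.support_nodup.sublist (List.take_sublist _ _)

/-- In an induced path, adjacent vertices have consecutive indices. -/
theorem chord_consec {u v : V} {Q : G.Walk u v} (hQ : IsInducedPath G Q) {i j : ℕ}
    (hi : i ≤ Q.length) (hj : j ≤ Q.length)
    (hadj : G.Adj (Q.getVert i) (Q.getVert j)) : j = i + 1 ∨ i = j + 1 := by
  have hmemi : Q.getVert i ∈ Q.support :=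
    Walk.mem_support_iff_exists_getVert.mpr ⟨i, rfl, hi⟩
  have hmemj : Q.getVert j ∈ Q.support :=
    Walk.mem_support_iff_exists_getVert.mpr ⟨j, rfl, hj⟩
  have hsub := hQ.2 _ hmemi _ hmemj hadj
  rw [Walk.toSubgraph_adj_iff] at hsub
  obtain ⟨t, ht, htl⟩ := hsub
  rw [Sym2.eq_iff] at ht
  rcases ht with ⟨h1, h2⟩ | ⟨h1, h2⟩
  · have e1 := getVert_injOn hQ.1 (by omega) hi h1
    have e2 := getVert_injOn hQ.1 (by omega) hj h2
    omega
  · have e1 := getVert_injOn hQ.1 (by omega) hj h1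
    have e2 := getVert_injOn hQ.1 (by omega) hi h2
    omega

theorem isInduced_drop {u v : V} {Q : G.Walk u v} (hQ : IsInducedPath G Q) {n : ℕ}
    (hn : n ≤ Q.length) : IsInducedPath G (Q.drop n) := by
  refine ⟨isPath_drop hQ.1 hn, ?_⟩
  intro a ha b hb hadj
  obtain ⟨i, hi, hil⟩ := Walk.mem_support_iff_exists_getVert.mp ha
  obtain ⟨j, hj, hjl⟩ := Walk.mem_support_iff_exists_getVert.mp hb
  rw [length_drop] at hil hjl
  rw [getVert_drop] at hi hj
  subst hi hj
  have := chord_consec hQ (i := n + i) (j := n + j) (by omega) (by omega) hadj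
  rcases this with h | h
  · have : j = i + 1 := by omega
    subst this
    have := Walk.toSubgraph_adj_getVert (Q.drop n) (i := i) (by rw [length_drop]; omega)
    rw [getVert_drop, getVert_drop] at this
    exact this
  · have : i = j + 1 := by omega
    subst this
    have := Walk.toSubgraph_adj_getVert (Q.drop n) (i := j) (by rw [length_drop]; omega)
    rw [getVert_drop, getVert_drop] at this
    exact this.symm

theorem isInduced_takeW {u v : V} {Q : G.Walk u v} (hQ : IsInducedPath G Q) {n : ℕ}
    (hn : n ≤ Q.length) : IsInducedPath G (takeW Q n) := by
  refine ⟨isPath_takeW hQ.1 hn, ?_⟩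
  intro a ha b hb hadj
  obtain ⟨i, hi, hil⟩ := Walk.mem_support_iff_exists_getVert.mp ha
  obtain ⟨j, hj, hjl⟩ := Walk.mem_support_iff_exists_getVert.mp hb
  rw [length_takeW Q n hn] at hil hjl
  rw [getVert_takeW Q hil] at hi
  rw [getVert_takeW Q hjl] at hj
  subst hi hj
  have := chord_consec hQ (i := i) (j := j) (by omega) (by omega) hadj
  rcases this with h | h
  · subst h
    have h2 := Walk.toSubgraph_adj_getVert (takeW Q n) (i := i)
      (by rw [length_takeW Q n hn]; omega)
    rwa [getVert_takeW Q (by omega), getVert_takeW Q (by omega)] at h2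
  · subst h
    have h2 := Walk.toSubgraph_adj_getVert (takeW Q n) (i := j)
      (by rw [length_takeW Q n hn]; omega)
    rw [getVert_takeW Q (by omega), getVert_takeW Q (by omega)] at h2
    exact h2.symm

/-- A path of length at most 2 between non-adjacent vertices is induced. -/
theorem isInduced_of_length_le_two {u v : V} {P : G.Walk u v} (hP : P.IsPath)
    (hl : P.length ≤ 2) (huv : ¬ G.Adj u v) : IsInducedPath G P := by
  refine ⟨hP, ?_⟩
  intro a ha b hb hadj
  obtain ⟨i, hi, hil⟩ := Walk.mem_support_iff_exists_getVert.mp ha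
  obtain ⟨j, hj, hjl⟩ := Walk.mem_support_iff_exists_getVert.mp hb
  subst hi hj
  have hne : i ≠ j := by
    intro h; subst h; exact G.irrefl hadj
  have hcase : j = i + 1 ∨ i = j + 1 ∨ (i = 0 ∧ j = P.length) ∨ (j = 0 ∧ i = P.length) := by
    omega
  rcases hcase with h | h | ⟨h0, hL⟩ | ⟨h0, hL⟩
  · subst h; exact Walk.toSubgraph_adj_getVert _ (by omega)
  · subst h; exact (Walk.toSubgraph_adj_getVert _ (by omega)).symm
  · subst h0; subst hL
    rw [Walk.getVert_zero, Walk.getVert_length] at hadj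
    exact absurd hadj huv
  · subst h0; subst hL
    rw [Walk.getVert_zero, Walk.getVert_length] at hadj
    exact absurd hadj.symm huv

theorem isInduced_reverse {u v : V} {Q : G.Walk u v} (hQ : IsInducedPath G Q) :
    IsInducedPath G Q.reverse := by
  refine ⟨hQ.1.reverse, ?_⟩
  intro a ha b hb hadj
  rw [Walk.support_reverse, List.mem_reverse] at ha hb
  rw [Walk.toSubgraph_reverse]
  exact hQ.2 a ha b hb hadj

theorem mem_internals_reverse {u v : V} {Q : G.Walk u v} {x : V} :
    x ∈ internals Q.reverse ↔ x ∈ internals Q := by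
  rw [mem_internals_iff, mem_internals_iff]
  constructor
  · rintro ⟨j, h1, h2, rfl⟩
    rw [Walk.length_reverse] at h2
    refine ⟨Q.length - j, by omega, by omega, ?_⟩
    rw [Walk.getVert_reverse]
  · rintro ⟨j, h1, h2, rfl⟩
    have hr : Q.reverse.length = Q.length := Walk.length_reverse Q
    refine ⟨Q.length - j, by omega, by omega, ?_⟩
    rw [Walk.getVert_reverse]; congr 1; omega



def SPDom {V : Type*} (G : SimpleGraph V) (n : ℕ) : Prop :=
  ∀ u v : V, ¬ G.Adj u v → G.dist u v = n → ∀ (P Q : G.Walk u v), P.IsPath →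
    P.length = n → IsInducedPath G Q → 3 ≤ Q.length → Dominates G P Q

variable {V : Type*} {G : SimpleGraph V}


theorem tailStep (hc : G.Connected) {n : ℕ} (hIH : ∀ m, m < n → SPDom G m) (hn3 : 3 ≤ n)
    {u v : V} (huv : ¬ G.Adj u v) (hdist : G.dist u v = n) (P Q : G.Walk u v)
    (hP : P.IsPath) (hPl : P.length = n) (hQ : IsInducedPath G Q) (hQ3 : 3 ≤ Q.length)
    {j : ℕ} (hj0 : 0 < j) (hjk : j < Q.length)
    (hgreat : ∀ i, j ≤ i → i ≤ Q.length →
      ¬(P.getVert 1 = Q.getVert i ∨ G.Adj (P.getVert 1) (Q.getVert i))) :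
    Q.getVert j ∈ P.support ∨ ∃ y ∈ internals P, G.Adj (Q.getVert j) y := by
  classical
  set k := Q.length with hk
  set p1 := P.getVert 1 with hp1
  set x := Q.getVert j with hx
  -- basic facts about p1
  have hup1 : G.Adj u p1 := by
    have := P.adj_getVert_succ (i := 0) (by omega)
    rwa [Walk.getVert_zero] at this
  have hP2path : (P.drop 1).IsPath := isPath_drop hP (by omega)
  have hP2len : (P.drop 1).length = n - 1 := by rw [length_drop, hPl]
  have hdp1v_le : G.dist p1 v ≤ n - 1 := by
    have := dist_le (P.drop 1)
    rwa [hP2len] at this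
  have hdp1v : G.dist p1 v = n - 1 := by
    have htri := hc.dist_triangle (u := u) (v := p1) (w := v)
    have hd1 : G.dist u p1 ≤ 1 := by
      have := dist_le (Walk.cons hup1 Walk.nil)
      simpa using this
    omega
  have hp1v_nadj : ¬ G.Adj p1 v := by
    intro h
    have := dist_eq_one_iff_adj.mpr h
    omega
  have hp1v_ne : p1 ≠ v := by
    intro h
    rw [h] at hdp1v
    rw [SimpleGraph.dist_self] at hdp1v
    omega
  -- the greatest index of a vertex of Q in the closed neighborhood of p1
  set pred := fun i => p1 = Q.getVert i ∨ G.Adj p1 (Q.getVert i) with hpreddef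
  have hpred0 : pred 0 := by
    right; rw [Walk.getVert_zero]; exact hup1.symm
  set s := Nat.findGreatest pred k with hs
  have hs_spec : pred s := Nat.findGreatest_spec (Nat.zero_le k) hpred0
  have hs_le : s ≤ k := Nat.findGreatest_le k
  have hmax : ∀ i, s < i → i ≤ k → ¬ pred i := fun i h1 h2 => Nat.findGreatest_is_greatest h1 h2
  have hsj : s < j := by
    by_contra h
    exact hgreat s (by omega) (by omega) hs_spec
  -- hence s + 2 ≤ k  (since s < j < k)
  have hsk2 : s + 2 ≤ k := by omega
  -- transfer lemmas for the conclusion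
  have hsupp_sub : ∀ z, z ∈ (P.drop 1).support → z ∈ P.support := by
    intro z hz
    rw [support_drop P 1 (by omega)] at hz
    exact List.drop_subset _ _ hz
  have hintcopy : ∀ (w' : V) (hw : p1 = w') (y : V),
      y ∈ internals ((P.drop 1).copy hw rfl) → y ∈ internals (P.drop 1) := by
    rintro w' rfl y hy
    rwa [Walk.copy_rfl_rfl] at hy
  have hint_sub : ∀ y, y ∈ internals (P.drop 1) → y ∈ internals P := by
    intro y hy
    rw [mem_internals_iff] at hy ⊢
    obtain ⟨m, hm0, hml, hmv⟩ := hy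
    rw [hP2len] at hml
    rw [getVert_drop] at hmv
    exact ⟨1 + m, by omega, by omega, hmv⟩
  by_cases hps : p1 = Q.getVert s
  · -- p1 lies on Q; use the tail of Q from index s
    have hT3 : 3 ≤ k - s := by
      rcases Nat.lt_or_ge (k - s) 3 with h | h
      · exfalso
        have hjks : j = s + 1 := by omega
        have hadj := Q.adj_getVert_succ (i := s) (by omega)
        rw [← hps] at hadj
        exact hgreat j (le_refl j) (by omega) (Or.inr (by rw [hjks]; exact hadj))
      · exact h
    have hdom := hIH (n-1) (by omega) (Q.getVert s) v
      (by rw [← hps]; exact hp1v_nadj)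
      (by rw [← hps]; exact hdp1v)
      ((P.drop 1).copy hps rfl) (Q.drop s)
      (by simpa using hP2path)
      (by simpa using hP2len)
      (isInduced_drop hQ (by omega))
      (by rw [length_drop]; omega)
    have hxmem : x ∈ internals (Q.drop s) := by
      rw [mem_internals_iff]
      refine ⟨j - s, by omega, by rw [length_drop]; omega, ?_⟩
      rw [getVert_drop]; congr 1; omega
    rcases hdom x hxmem with h | ⟨y, hy, hadj⟩
    · left
      apply hsupp_sub
      simpa using h
    · right
      refine ⟨y, hint_sub y (hintcopy _ hps y hy), hadj⟩
  · -- p1 is adjacent to Q.getVert s; prepend p1 to the tail of Q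
    have hadjs : G.Adj p1 (Q.getVert s) := hs_spec.resolve_left hps
    have hp1notmem : p1 ∉ (Q.drop s).support := by
      intro hmem
      rw [Walk.mem_support_iff_exists_getVert] at hmem
      obtain ⟨m, hmv, hml⟩ := hmem
      rw [getVert_drop] at hmv
      rw [length_drop] at hml
      rcases Nat.eq_zero_or_pos m with h0 | h0
      · subst h0
        exact hps hmv.symm
      · exact hmax (s + m) (by omega) (by omega) (Or.inl hmv.symm)
    set T := Walk.cons hadjs (Q.drop s) with hT
    have hTlen : T.length = k - s + 1 := by
      rw [hT, Walk.length_cons, length_drop]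
    have hTpath : T.IsPath := (isPath_drop hQ.1 (by omega)).cons hp1notmem
    have hTind : IsInducedPath G T := by
      refine ⟨hTpath, ?_⟩
      intro a ha b hb hadj
      rw [hT, Walk.support_cons] at ha hb
      have key : ∀ c, c ∈ (Q.drop s).support → G.Adj p1 c →
          T.toSubgraph.Adj p1 c := by
        intro c hc hpc
        rw [Walk.mem_support_iff_exists_getVert] at hc
        obtain ⟨m, hmv, hml⟩ := hc
        rw [getVert_drop] at hmv
        rw [length_drop] at hml
        have hm0 : m = 0 := by
          by_contra hm0
          refine hmax (s + m) (by omega) (by omega) (Or.inr ?_)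
          rw [hmv]; exact hpc
        subst hm0
        rw [hT]
        simp only [Walk.toSubgraph, Subgraph.sup_adj]
        left
        rw [← hmv]
        simpa using hpc
      rcases List.mem_cons.mp ha with rfl | ha' <;> rcases List.mem_cons.mp hb with rfl | hb'
      · exact absurd hadj (G.irrefl)
      · exact key b hb' hadj
      · exact (key a ha' hadj.symm).symm
      · have := (isInduced_drop hQ (by omega : s ≤ Q.length)).2 a ha' b hb' hadj
        rw [hT]
        simp only [Walk.toSubgraph, Subgraph.sup_adj]
        right
        exact this
    have hdom := hIH (n-1) (by omega) p1 v hp1v_nadj hdp1v (P.drop 1) T hP2path hP2len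
      hTind (by omega)
    have hxmem : x ∈ internals T := by
      rw [mem_internals_iff]
      refine ⟨j - s + 1, by omega, by omega, ?_⟩
      rw [hT, Walk.getVert_cons_succ, getVert_drop]
      congr 1; omega
    rcases hdom x hxmem with h | ⟨y, hy, hadj⟩
    · exact Or.inl (hsupp_sub x h)
    · exact Or.inr ⟨y, hint_sub y hy, hadj⟩


theorem main (hc : G.Connected)
    (hl2 : ∀ u v : V, ¬ G.Adj u v → ∀ (W W' : G.Walk u v),
      IsInducedPath G W → W.length ≤ 2 →
      IsInducedPath G W' → 3 ≤ W'.length → Dominates G W W') :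
    ∀ n : ℕ, SPDom G n := by
  intro n
  induction n using Nat.strong_induction_on with
  | _ n IH =>
  intro u v huv hdist P Q hP hPl hQ hQ3 x hx
  classical
  set k := Q.length with hk
  have hne : u ≠ v := by
    intro h
    have h0 := getVert_injOn hQ.1 (Nat.zero_le _) (le_refl Q.length)
      (by rw [Walk.getVert_zero, Walk.getVert_length, h])
    omega
  have hn0 : n ≠ 0 := by
    intro h; rw [h] at hdist
    exact hne (hc.dist_eq_zero_iff.mp hdist)
  have hn1 : n ≠ 1 := by
    intro h; rw [h] at hdist
    exact huv (dist_eq_one_iff_adj.mp hdist)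
  rcases Nat.lt_or_ge n 3 with hn2 | hn3
  · -- base case: n = 2, P is an induced path of length 2
    have hPind := isInduced_of_length_le_two hP (by omega) huv
    exact hl2 u v huv P Q hPind (by omega) hQ hQ3 x hx
  -- inductive case: n ≥ 3
  obtain ⟨j, hj0, hjk, rfl⟩ := mem_internals_iff.mp hx
  set p1 := P.getVert 1 with hp1
  set pd1 := P.getVert (P.length - 1) with hpd1
  by_cases hN1 : p1 = Q.getVert j ∨ G.Adj p1 (Q.getVert j)
  · rcases hN1 with h | h
    · left
      rw [← h]
      exact Walk.mem_support_iff_exists_getVert.mpr ⟨1, rfl, by omega⟩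
    · right
      refine ⟨p1, ?_, h.symm⟩
      exact mem_internals_iff.mpr ⟨1, by omega, by omega, rfl⟩
  by_cases hN2 : pd1 = Q.getVert j ∨ G.Adj pd1 (Q.getVert j)
  · rcases hN2 with h | h
    · left
      rw [← h]
      exact Walk.mem_support_iff_exists_getVert.mpr ⟨P.length - 1, rfl, by omega⟩
    · right
      refine ⟨pd1, ?_, h.symm⟩
      exact mem_internals_iff.mpr ⟨P.length - 1, by omega, by omega, rfl⟩
  -- the greatest index on Q of a vertex in N[p1]
  set pred := fun i => p1 = Q.getVert i ∨ G.Adj p1 (Q.getVert i) with hpreddef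
  have hup1 : G.Adj u p1 := by
    have := P.adj_getVert_succ (i := 0) (by omega)
    rwa [Walk.getVert_zero] at this
  have hpred0 : pred 0 := by
    right; rw [Walk.getVert_zero]; exact hup1.symm
  set s := Nat.findGreatest pred k with hs
  have hs_spec : pred s := Nat.findGreatest_spec (Nat.zero_le k) hpred0
  have hs_le : s ≤ k := Nat.findGreatest_le k
  have hmax : ∀ i, s < i → i ≤ k → ¬ pred i := fun i h1 h2 => Nat.findGreatest_is_greatest h1 h2
  have hjs_ne : j ≠ s := by
    intro h; rw [h] at hN1; exact hN1 hs_spec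
  rcases Nat.lt_or_ge s j with hsj | hjs
  · -- x lies beyond all neighbors of p1 on Q: use tailStep directly
    exact tailStep hc IH hn3 huv hdist P Q hP hPl hQ hQ3 hj0 hjk
      (fun i h1 h2 hpredi => hmax i (by omega) h2 hpredi)
  · -- j < s
    have hsj' : j < s := by omega
    have hs2 : 2 ≤ s := by omega
    have hps : p1 ≠ Q.getVert s := by
      intro h
      have hadj : G.Adj (Q.getVert 0) (Q.getVert s) := by
        rw [h] at hup1
        rw [Walk.getVert_zero]
        exact hup1
      have := chord_consec hQ (by omega) (by omega) hadj
      omega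
    have hadjs : G.Adj p1 (Q.getVert s) := hs_spec.resolve_left hps
    rcases Nat.lt_or_ge s 3 with hs3 | hs3
    · -- s = 2, j = 1 : work from the v-side with reversed walks
      have hs2' : s = 2 := by omega
      have hj1 : j = 1 := by omega
      -- facts about pd1
      have hadjd : G.Adj pd1 v := by
        have := P.adj_getVert_succ (i := P.length - 1) (by omega)
        have he : P.length - 1 + 1 = P.length := by omega
        rw [he, Walk.getVert_length] at this
        exact this
      have hdupd1 : n - 1 ≤ G.dist u pd1 := by
        have htri := hc.dist_triangle (u := u) (v := pd1) (w := v)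
        have hd1 : G.dist pd1 v ≤ 1 := by
          have := dist_le (Walk.cons hadjd Walk.nil)
          simpa using this
        omega
      have hpd1u_ne : pd1 ≠ u := by
        intro h
        rw [h, SimpleGraph.dist_self] at hdupd1
        omega
      have hpd1u_nadj : ¬ G.Adj pd1 u := by
        intro h
        have := dist_eq_one_iff_adj.mpr (G.adj_symm h)
        omega
      -- apply tailStep to the reversed walks
      have hrev := tailStep (n := n) hc IH hn3 (fun h => huv (G.adj_symm h))
        (by rwa [SimpleGraph.dist_comm]) P.reverse Q.reverse hP.reverse
        (by rwa [Walk.length_reverse]) (isInduced_reverse hQ)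
        (by rwa [Walk.length_reverse]) (j := k - 1) (by omega)
        (by rw [Walk.length_reverse]; omega) ?_
      · have hxrev : Q.reverse.getVert (k - 1) = Q.getVert j := by
          rw [Walk.getVert_reverse]
          congr 1
          omega
        rw [hxrev] at hrev
        rcases hrev with h | ⟨y, hy, hadj⟩
        · left
          rw [Walk.support_reverse, List.mem_reverse] at h
          exact h
        · right
          exact ⟨y, mem_internals_reverse.mp hy, hadj⟩
      · -- no vertex of Q.reverse with index ≥ k-1 is in N[P.reverse.getVert 1]
        intro i h1 h2 hpredi
        rw [Walk.length_reverse] at h2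
        have hrev1 : P.reverse.getVert 1 = pd1 := by
          rw [Walk.getVert_reverse]
        rw [hrev1] at hpredi
        have hcases : i = k - 1 ∨ i = k := by omega
        rcases hcases with rfl | rfl
        · have hq : Q.reverse.getVert (k - 1) = Q.getVert j := by
            rw [Walk.getVert_reverse]; congr 1; omega
          rw [hq] at hpredi
          exact hN2 hpredi
        · have hq : Q.reverse.getVert k = u := by
            rw [Walk.getVert_reverse]
            have : Q.length - k = 0 := by omega
            rw [this, Walk.getVert_zero]
          rw [hq] at hpredi
          rcases hpredi with h | h
          · exact hpd1u_ne h
          · exact hpd1u_nadj h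
    · -- s ≥ 3 : the length-2 path u-p1-q_s must dominate the front part of Q; contradiction
      exfalso
      have hnuw : u ≠ Q.getVert s := by
        intro h
        have := getVert_injOn hQ.1 (Nat.zero_le _) (by omega : s ≤ Q.length)
          (by rw [Walk.getVert_zero]; exact h)
        omega
      have hnadjuw : ¬ G.Adj u (Q.getVert s) := by
        intro h
        have hadj : G.Adj (Q.getVert 0) (Q.getVert s) := by rw [Walk.getVert_zero]; exact h
        have := chord_consec hQ (by omega) (by omega) hadj
        omega
      set W2 : G.Walk u (Q.getVert s) := Walk.cons hup1 (Walk.cons hadjs Walk.nil) with hW2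
      have hW2path : W2.IsPath := by
        rw [hW2]
        simp [Walk.cons_isPath_iff, hup1.ne, hps, hnuw]
      have hW2len : W2.length = 2 := rfl
      have hW2ind : IsInducedPath G W2 := isInduced_of_length_le_two hW2path (by omega) hnadjuw
      have hQf := isInduced_takeW hQ (by omega : s ≤ Q.length)
      have hdom := hl2 u (Q.getVert s) hnadjuw W2 (takeW Q s) hW2ind (by omega) hQf
        (by rw [length_takeW Q s (by omega)]; omega)
      have hxmem : Q.getVert j ∈ internals (takeW Q s) := by
        rw [mem_internals_iff]
        refine ⟨j, by omega, by rw [length_takeW Q s (by omega)]; omega, ?_⟩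
        rw [getVert_takeW Q (by omega : j ≤ s)]
      rcases hdom _ hxmem with h | ⟨y, hy, hadj⟩
      · -- x would be u, p1 or w; all impossible
        rw [hW2] at h
        simp only [Walk.support_cons, Walk.support_nil, List.mem_cons,
          List.mem_singleton, List.not_mem_nil] at h
        rcases h with h | h | h | h
        · have := getVert_injOn hQ.1 (by omega : j ≤ Q.length) (Nat.zero_le _)
            (by rw [Walk.getVert_zero]; exact h)
          omega
        · exact hN1 (Or.inl h.symm)
        · have := getVert_injOn hQ.1 (by omega : j ≤ Q.length) (by omega : s ≤ Q.length) h
          omega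
        · exact h.elim
      · -- internals W2 = [p1]
        have hyp1 : y = p1 := by
          have : internals W2 = [p1] := rfl
          rw [this] at hy
          simpa using hy
        rw [hyp1] at hadj
        exact hN1 (Or.inr hadj.symm)

end Helpers

theorem sp_m3_eq_l2_m3 {V : Type*} [Fintype V] (G : SimpleGraph V)
    (hc : G.Connected) :
    ((∀ u v : V, ¬ G.Adj u v → ∀ (W W' : G.Walk u v),
        W.IsPath → W.length = G.dist u v →
        IsInducedPath G W' → 3 ≤ W'.length → Dominates G W W') ↔
      (∀ u v : V, ¬ G.Adj u v → ∀ (W W' : G.Walk u v),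
        IsInducedPath G W → W.length ≤ 2 →
        IsInducedPath G W' → 3 ≤ W'.length → Dominates G W W')) ∧
    ((∀ u v : V, ¬ G.Adj u v → ∀ (W W' : G.Walk u v),
        IsInducedPath G W' → 3 ≤ W'.length → Dominates G W W') →
      (∀ u v : V, ¬ G.Adj u v → ∀ (W W' : G.Walk u v),
        W.IsPath → W.length = G.dist u v →
        IsInducedPath G W' → 3 ≤ W'.length → Dominates G W W')) := by
  constructor
  · constructor
    · -- SP/m3 → l2/m3
      intro hSP u v huv W W' hWind hWle hW'ind hW'3
      have hne : u ≠ v := by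
        intro h
        have h0 := Helpers.getVert_injOn hW'ind.1 (Nat.zero_le _) (le_refl W'.length)
          (by rw [Walk.getVert_zero, Walk.getVert_length, h])
        omega
      have hlen0 : W.length ≠ 0 := by
        intro h0
        apply hne
        have hv := W.getVert_length
        rw [h0, Walk.getVert_zero] at hv
        exact hv
      have hlen1 : W.length ≠ 1 := by
        intro h1
        have hadj := W.adj_getVert_succ (i := 0) (by omega)
        rw [Walk.getVert_zero] at hadj
        have hv : W.getVert 1 = v := by rw [← h1]; exact W.getVert_length
        rw [hv] at hadj
        exact huv hadj
      have hd0 : G.dist u v ≠ 0 := by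
        intro h; exact hne (hc.dist_eq_zero_iff.mp h)
      have hd1 : G.dist u v ≠ 1 := fun h => huv (SimpleGraph.dist_eq_one_iff_adj.mp h)
      have hdle := SimpleGraph.dist_le W
      exact hSP u v huv W W' hWind.1 (by omega) hW'ind hW'3
    · -- l2/m3 → SP/m3
      intro hl2 u v huv W W' hWpath hWlen hW'ind hW'3
      exact Helpers.main hc hl2 (G.dist u v) u v huv rfl W W' hWpath hWlen hW'ind hW'3
  · intro h u v huv W W' _ _ hW' h3
    exact h u v huv W W' hW' h3
end

section
/- Let G be a finite simple connected graph, u and v non-adjacent vertices, W an induced uv-path of length at least 3, and W' a uv-path of length 3 with internal vertices x1', x2' not on W. If neither x1' nor x2' is adjacent to any internal vertex of W, then G contains a hole (an induced cycle of length at least 5). -/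
open SimpleGraph

lemma mem_support_cases {V : Type*} {G : SimpleGraph V} {u v : V} (W : G.Walk u v) {x : V}
    (hx : x ∈ W.support) : x = u ∨ x = v ∨ x ∈ internals W := by
  rw [W.support_eq_cons] at hx
  rcases List.mem_cons.1 hx with h | h
  · exact Or.inl h
  · have hne : W.support.tail ≠ [] := List.ne_nil_of_mem h
    rw [← List.dropLast_append_getLast hne] at h
    rcases List.mem_append.1 h with h | h
    · exact Or.inr (Or.inr h)
    · right; left
      have := List.getLast_tail hne
      rw [List.mem_singleton.1 h, this, W.getLast_support]

lemma start_ne_end {V : Type*} {G : SimpleGraph V} {u v : V} {W : G.Walk u v}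
    (hp : W.IsPath) (hl : 1 ≤ W.length) : u ≠ v := by
  cases W with
  | nil => simp at hl
  | cons h p =>
    rw [Walk.cons_isPath_iff] at hp
    exact fun huv => hp.2 (huv ▸ p.end_mem_support)

lemma hasHole_one {V : Type*} {G : SimpleGraph V} {u v : V} (huv : ¬ G.Adj u v)
    (W : G.Walk u v) (hW : IsInducedPath G W) (h3 : 3 ≤ W.length)
    {x : V} (hx : x ∉ W.support) (hux : G.Adj u x) (hxv : G.Adj x v)
    (hint : ∀ y ∈ internals W, ¬ G.Adj x y) : HasHole G := by
  have huv' : u ≠ v := start_ne_end hW.1 (by omega)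
  have hxu : x ≠ u := fun h => hx (h ▸ W.start_mem_support)
  refine ⟨u, Walk.cons hux (Walk.cons hxv W.reverse), ?_, ?_, ?_⟩
  · rw [Walk.cons_isCycle_iff]
    constructor
    · rw [Walk.cons_isPath_iff]
      exact ⟨hW.1.reverse, by simpa using hx⟩
    · intro h
      rw [Walk.edges_cons] at h
      rcases List.mem_cons.1 h with h | h
      · rcases Sym2.eq_iff.1 h with ⟨h1, h2⟩ | ⟨h1, h2⟩
        · exact hxu h1.symm
        · exact huv' h1
      · exact hx (by simpa using Walk.snd_mem_support_of_mem_edges _ h)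
  · simp only [Walk.length_cons, Walk.length_reverse]; omega
  · have hsub : ∀ a b : V, W.toSubgraph.Adj a b →
        (Walk.cons hux (Walk.cons hxv W.reverse)).toSubgraph.Adj a b := by
      intro a b hab
      simp only [Walk.toSubgraph, Walk.toSubgraph_reverse, Subgraph.sup_adj]
      tauto
    have key : ∀ b ∈ W.support, G.Adj x b →
        (Walk.cons hux (Walk.cons hxv W.reverse)).toSubgraph.Adj x b := by
      intro b hb hadjb
      rcases mem_support_cases W hb with rfl | rfl | hbint
      · simp [Walk.toSubgraph, Subgraph.sup_adj]
      · simp [Walk.toSubgraph, Subgraph.sup_adj]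
      · exact absurd hadjb (hint b hbint)
    intro a ha b hb hab
    have ha' : a = x ∨ a ∈ W.support := by
      simp only [Walk.support_cons, List.mem_cons, Walk.support_reverse, List.mem_reverse] at ha
      rcases ha with rfl | rfl | h
      · exact Or.inr W.start_mem_support
      · exact Or.inl rfl
      · exact Or.inr h
    have hb' : b = x ∨ b ∈ W.support := by
      simp only [Walk.support_cons, List.mem_cons, Walk.support_reverse, List.mem_reverse] at hb
      rcases hb with rfl | rfl | h
      · exact Or.inr W.start_mem_support
      · exact Or.inl rfl
      · exact Or.inr h
    rcases ha' with rfl | haW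
    · rcases hb' with rfl | hbW
      · exact absurd rfl hab.ne
      · exact key b hbW hab
    · rcases hb' with rfl | hbW
      · exact (key a haW hab.symm).symm
      · exact hsub a b (hW.2 a haW b hbW hab)

lemma hasHole_two {V : Type*} {G : SimpleGraph V} {u v : V} (huv : ¬ G.Adj u v)
    (W : G.Walk u v) (hW : IsInducedPath G W) (h3 : 3 ≤ W.length)
    {x1 x2 : V} (hx1 : x1 ∉ W.support) (hx2 : x2 ∉ W.support)
    (hux1 : G.Adj u x1) (h12 : G.Adj x1 x2) (h2v : G.Adj x2 v)
    (hx1v : ¬ G.Adj x1 v) (hux2 : ¬ G.Adj u x2)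
    (hint1 : ∀ y ∈ internals W, ¬ G.Adj x1 y)
    (hint2 : ∀ y ∈ internals W, ¬ G.Adj x2 y) : HasHole G := by
  have huv' : u ≠ v := start_ne_end hW.1 (by omega)
  have hx1u : x1 ≠ u := fun h => hx1 (h ▸ W.start_mem_support)
  have hx2u : x2 ≠ u := fun h => hx2 (h ▸ W.start_mem_support)
  refine ⟨u, Walk.cons hux1 (Walk.cons h12 (Walk.cons h2v W.reverse)), ?_, ?_, ?_⟩
  · rw [Walk.cons_isCycle_iff]
    constructor
    · rw [Walk.cons_isPath_iff, Walk.cons_isPath_iff]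
      refine ⟨⟨hW.1.reverse, by simpa using hx2⟩, ?_⟩
      simp only [Walk.support_cons, List.mem_cons, Walk.support_reverse, List.mem_reverse]
      push_neg
      exact ⟨h12.ne, fun h => hx1 h⟩
    · intro h
      rw [Walk.edges_cons, Walk.edges_cons] at h
      rcases List.mem_cons.1 h with h | h
      · rcases Sym2.eq_iff.1 h with ⟨he1, he2⟩ | ⟨he1, he2⟩
        · exact hx1u he1.symm
        · exact hx2u he1.symm
      · rcases List.mem_cons.1 h with h | h
        · rcases Sym2.eq_iff.1 h with ⟨he1, he2⟩ | ⟨he1, he2⟩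
          · exact hx2u he1.symm
          · exact huv' he1
        · exact hx1 (by simpa using Walk.snd_mem_support_of_mem_edges _ h)
  · simp only [Walk.length_cons, Walk.length_reverse]; omega
  · set c := Walk.cons hux1 (Walk.cons h12 (Walk.cons h2v W.reverse)) with hc
    have hsub : ∀ a b : V, W.toSubgraph.Adj a b → c.toSubgraph.Adj a b := by
      intro a b hab
      simp only [hc, Walk.toSubgraph, Walk.toSubgraph_reverse, Subgraph.sup_adj]
      tauto
    have key1 : ∀ b ∈ W.support, G.Adj x1 b → c.toSubgraph.Adj x1 b := by
      intro b hb hadjb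
      rcases mem_support_cases W hb with rfl | rfl | hbint
      · simp [hc, Walk.toSubgraph, Subgraph.sup_adj]
      · exact absurd hadjb hx1v
      · exact absurd hadjb (hint1 b hbint)
    have key2 : ∀ b ∈ W.support, G.Adj x2 b → c.toSubgraph.Adj x2 b := by
      intro b hb hadjb
      rcases mem_support_cases W hb with rfl | rfl | hbint
      · exact absurd hadjb.symm hux2
      · simp [hc, Walk.toSubgraph, Subgraph.sup_adj]
      · exact absurd hadjb (hint2 b hbint)
    have hedge12 : c.toSubgraph.Adj x1 x2 := by
      simp [hc, Walk.toSubgraph, Subgraph.sup_adj]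
    intro a ha b hb hab
    have classify : ∀ z ∈ c.support, z = x1 ∨ z = x2 ∨ z ∈ W.support := by
      intro z hz
      simp only [hc, Walk.support_cons, List.mem_cons, Walk.support_reverse,
        List.mem_reverse] at hz
      rcases hz with rfl | rfl | rfl | h
      · exact Or.inr (Or.inr W.start_mem_support)
      · exact Or.inl rfl
      · exact Or.inr (Or.inl rfl)
      · exact Or.inr (Or.inr h)
    rcases classify a ha with rfl | rfl | haW
    · rcases classify b hb with rfl | rfl | hbW
      · exact absurd rfl hab.ne
      · exact hedge12
      · exact key1 b hbW hab
    · rcases classify b hb with rfl | rfl | hbW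
      · exact hedge12.symm
      · exact absurd rfl hab.ne
      · exact key2 b hbW hab
    · rcases classify b hb with rfl | rfl | hbW
      · exact (key1 a haW hab.symm).symm
      · exact (key2 a haW hab.symm).symm
      · exact hsub a b (hW.2 a haW b hbW hab)

theorem hole_extraction_l3 {V : Type*} [Fintype V] (G : SimpleGraph V)
    (hc : G.Connected) (u v : V) (huv : ¬ G.Adj u v)
    (W W' : G.Walk u v) (hW : IsInducedPath G W) (h3 : 3 ≤ W.length)
    (hW' : W'.IsPath) (hlen : W'.length = 3)
    (h1 : W'.getVert 1 ∉ W.support) (h2 : W'.getVert 2 ∉ W.support)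
    (hadj : ∀ y ∈ internals W, ¬ G.Adj (W'.getVert 1) y ∧ ¬ G.Adj (W'.getVert 2) y) :
    HasHole G := by
  set x1 := W'.getVert 1 with hx1def
  set x2 := W'.getVert 2 with hx2def
  have hux1 : G.Adj u x1 := by
    have := W'.adj_getVert_succ (i := 0) (by omega)
    rwa [W'.getVert_zero] at this
  have h12 : G.Adj x1 x2 := W'.adj_getVert_succ (i := 1) (by omega)
  have h2v : G.Adj x2 v := by
    have := W'.adj_getVert_succ (i := 2) (by omega)
    have h3' : W'.getVert 3 = v := by
      conv_lhs => rw [← hlen]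
      exact W'.getVert_length
    rwa [h3'] at this
  by_cases hA : G.Adj u x2
  · exact hasHole_one huv W hW h3 h2 hA h2v (fun y hy => (hadj y hy).2)
  · by_cases hB : G.Adj x1 v
    · exact hasHole_one huv W hW h3 h1 hux1 hB (fun y hy => (hadj y hy).1)
    · exact hasHole_two huv W hW h3 h1 h2 hux1 h12 h2v hB hA
        (fun y hy => (hadj y hy).1) (fun y hy => (hadj y hy).2)
end

section
/- Let G be a finite simple connected graph and u, v non-adjacent vertices. Let W: u = x0, x1, ..., xn = v be an induced uv-path and W': u = x0', x1', ..., xh' = v a shortest uv-path. Suppose x1' is not on W, not adjacent to any internal vertex of W, and x2' is not adjacent to x1 and x2' is not on W. Then G contains an induced cycle of length at least 5 (a hole). -/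
open SimpleGraph

section AuxLemmas
variable {V : Type*} {G : SimpleGraph V}

lemma support_eq_map_getVert {u v : V} (p : G.Walk u v) :
    p.support = (List.range (p.length + 1)).map p.getVert := by
  induction p with
  | nil => rfl
  | cons h q ih =>
    rw [Walk.support_cons, ih, Walk.length_cons, List.range_succ_eq_map (n := q.length + 1),
      List.map_cons, List.map_map]
    rfl

lemma internals_eq_map_getVert {u v : V} (p : G.Walk u v) :
    internals p = (List.range (p.length - 1)).map (fun i => p.getVert (i + 1)) := by
  unfold internals
  rw [support_eq_map_getVert, List.range_succ_eq_map, List.map_cons, List.tail_cons,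
    List.map_map]
  cases hn : p.length with
  | zero => simp
  | succ m =>
    rw [List.range_succ, List.map_append]
    simp only [List.map_cons, List.map_nil, List.dropLast_concat, Nat.succ_sub_one]
    simp [Function.comp]

lemma getVert_mem_internals {u v : V} (p : G.Walk u v) {i : ℕ} (h1 : 1 ≤ i)
    (h2 : i < p.length) : p.getVert i ∈ internals p := by
  rw [internals_eq_map_getVert]
  refine List.mem_map.mpr ⟨i - 1, List.mem_range.mpr (by omega), by congr 1; omega⟩

lemma getVert_inj_of_isPath {u v : V} {p : G.Walk u v} (hp : p.IsPath) :
    ∀ {i j : ℕ}, i ≤ p.length → j ≤ p.length → p.getVert i = p.getVert j → i = j := by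
  induction p with
  | nil => intro i j hi hj _; simp [Walk.length_nil] at hi hj; omega
  | cons h q ih =>
    intro i j hi hj hij
    match i, j with
    | 0, 0 => rfl
    | 0, (j+1) =>
      exfalso
      have : q.getVert j ∈ q.support :=
        Walk.mem_support_iff_exists_getVert.mpr ⟨j, rfl, by simpa [Walk.length_cons] using hj⟩
      simp only [Walk.getVert_cons_succ, Walk.getVert_zero] at hij
      rw [← hij] at this
      exact ((Walk.cons_isPath_iff h q).mp hp).2 this
    | (i+1), 0 =>
      exfalso
      have : q.getVert i ∈ q.support :=
        Walk.mem_support_iff_exists_getVert.mpr ⟨i, rfl, by simpa [Walk.length_cons] using hi⟩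
      simp only [Walk.getVert_cons_succ, Walk.getVert_zero] at hij
      rw [hij] at this
      exact ((Walk.cons_isPath_iff h q).mp hp).2 this
    | (i+1), (j+1) =>
      have := ih ((Walk.cons_isPath_iff h q).mp hp).1
        (by simpa [Walk.length_cons] using hi) (by simpa [Walk.length_cons] using hj)
        (by simpa [Walk.getVert_cons_succ] using hij)
      omega

lemma dist_start_getVert_le (hc : G.Connected) {u v : V} (p : G.Walk u v) (i : ℕ) :
    G.dist u (p.getVert i) ≤ i := by
  induction p generalizing i with
  | nil => simp [Walk.getVert, SimpleGraph.dist_self]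
  | cons h q ih =>
    match i with
    | 0 => simp [SimpleGraph.dist_self]
    | (i+1) =>
      calc G.dist _ ((Walk.cons h q).getVert (i+1)) ≤ G.dist _ _ + G.dist _ (q.getVert i) :=
            hc.dist_triangle
        _ ≤ 1 + i := by
            refine Nat.add_le_add ?_ (ih i)
            simpa using SimpleGraph.dist_le (Walk.cons h Walk.nil)
        _ = i + 1 := by omega

lemma dist_getVert_end_le {u v : V} (p : G.Walk u v) (i : ℕ) :
    G.dist (p.getVert i) v ≤ p.length - i := by
  induction p generalizing i with
  | nil => simp [Walk.getVert, SimpleGraph.dist_self]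
  | cons h q ih =>
    match i with
    | 0 =>
      simpa using SimpleGraph.dist_le (Walk.cons h q)
    | (i+1) =>
      simpa [Walk.length_cons, Nat.succ_sub_succ] using ih i

/-- Build a walk following `f 0, f 1, ..., f n`. -/
def chainWalk (G : SimpleGraph V) (f : ℕ → V) :
    (n : ℕ) → (h : ∀ i, i < n → G.Adj (f i) (f (i + 1))) → G.Walk (f 0) (f n)
  | 0, _ => Walk.nil
  | (n+1), h => (chainWalk G f n (fun i hi => h i (Nat.lt_succ_of_lt hi))).concat
      (h n (Nat.lt_succ_self n))

lemma chainWalk_length (f : ℕ → V) (n : ℕ) (h : ∀ i, i < n → G.Adj (f i) (f (i + 1))) :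
    (chainWalk G f n h).length = n := by
  induction n with
  | zero => rfl
  | succ n ih => rw [chainWalk, Walk.length_concat, ih]

lemma chainWalk_support (f : ℕ → V) (n : ℕ) (h : ∀ i, i < n → G.Adj (f i) (f (i + 1))) :
    (chainWalk G f n h).support = (List.range (n + 1)).map f := by
  induction n with
  | zero => rfl
  | succ n ih =>
    rw [chainWalk, Walk.support_concat, ih, List.range_succ (n := n + 1), List.map_append]
    simp

lemma chainWalk_edges (f : ℕ → V) (n : ℕ) (h : ∀ i, i < n → G.Adj (f i) (f (i + 1))) :
    (chainWalk G f n h).edges = (List.range n).map (fun i => s(f i, f (i + 1))) := by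
  induction n with
  | zero => rfl
  | succ n ih =>
    rw [chainWalk, Walk.edges_concat, ih, List.range_succ (n := n), List.map_append]
    simp

lemma chainWalk_getVert (f : ℕ → V) (n : ℕ) (h : ∀ i, i < n → G.Adj (f i) (f (i + 1)))
    {i : ℕ} (hi : i ≤ n) : (chainWalk G f n h).getVert i = f i := by
  induction n with
  | zero => interval_cases i; simp [chainWalk]
  | succ n ih =>
    rw [chainWalk, Walk.concat_eq_append, Walk.getVert_append, chainWalk_length]
    by_cases hlt : i < n
    · rw [if_pos hlt]; exact ih _ (le_of_lt hlt)
    · rw [if_neg hlt]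
      rcases Nat.eq_or_lt_of_le hi with h' | h'
      · subst h'; simp
      · have : i = n := by omega
        subst this
        simp

lemma hasHole_of_fun (g : ℕ → V) (m : ℕ) (hm : 5 ≤ m)
    (hinj : ∀ i < m, ∀ j < m, g i = g j → i = j)
    (hadj : ∀ i, i + 1 < m → G.Adj (g i) (g (i + 1)))
    (hclose : G.Adj (g (m - 1)) (g 0))
    (hchord : ∀ i < m, ∀ j < m, G.Adj (g i) (g j) →
      j = i + 1 ∨ i = j + 1 ∨ (i = 0 ∧ j = m - 1) ∨ (j = 0 ∧ i = m - 1)) :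
    HasHole G := by
  have hedge : ∀ i, i < m - 1 → G.Adj (g i) (g (i + 1)) := fun i hi => hadj i (by omega)
  set P : G.Walk (g 0) (g (m - 1)) := chainWalk G g (m - 1) hedge with hP
  set C : G.Walk (g (m - 1)) (g (m - 1)) := Walk.cons hclose P with hC
  have hsupC : ∀ a ∈ C.support, ∃ i, i < m ∧ g i = a := by
    intro a ha
    rw [hC, Walk.support_cons] at ha
    rcases List.mem_cons.mp ha with h | h
    · exact ⟨m - 1, by omega, h.symm⟩
    · rw [hP, chainWalk_support] at h
      obtain ⟨i, hi, hgi⟩ := List.mem_map.mp h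
      exact ⟨i, by have := List.mem_range.mp hi; omega, hgi⟩
  have hPpath : P.IsPath := by
    rw [Walk.isPath_def, hP, chainWalk_support]
    refine List.Nodup.map_on ?_ List.nodup_range
    intro x hx y hy hxy
    exact hinj x (by have := List.mem_range.mp hx; omega) y
      (by have := List.mem_range.mp hy; omega) hxy
  have hCcyc : C.IsCycle := by
    rw [hC, Walk.cons_isCycle_iff]
    refine ⟨hPpath, ?_⟩
    rw [hP, chainWalk_edges]
    intro hmem
    obtain ⟨i, hi, heq⟩ := List.mem_map.mp hmem
    have hi' : i < m - 1 := List.mem_range.mp hi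
    rw [Sym2.eq_iff] at heq
    rcases heq with ⟨h1, h2⟩ | ⟨h1, h2⟩
    · have := hinj i (by omega) (m - 1) (by omega) h1
      omega
    · have e1 := hinj i (by omega) 0 (by omega) h1
      have e2 := hinj (i + 1) (by omega) (m - 1) (by omega) h2
      omega
  have hClen : C.length = m := by
    rw [hC, Walk.length_cons, hP, chainWalk_length]; omega
  have hsub : ∀ i, i + 1 < m → C.toSubgraph.Adj (g i) (g (i + 1)) := by
    intro i hi
    have : P.toSubgraph.Adj (g i) (g (i + 1)) := by
      have h1 : i < P.length := by rw [hP, chainWalk_length]; omega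
      have := Walk.toSubgraph_adj_getVert P h1
      rwa [hP, chainWalk_getVert g (m-1) hedge (by omega),
        chainWalk_getVert g (m-1) hedge (by omega)] at this
    rw [hC]
    exact Subgraph.sup_adj.mpr (Or.inr this)
  have hsubc : C.toSubgraph.Adj (g (m - 1)) (g 0) := by
    rw [hC]
    exact Subgraph.sup_adj.mpr (Or.inl (by rw [subgraphOfAdj_adj]))
  refine ⟨g (m - 1), C, hCcyc, by omega, ?_⟩
  intro a ha b hb hab
  obtain ⟨i, hi, rfl⟩ := hsupC a ha
  obtain ⟨j, hj, rfl⟩ := hsupC b hb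
  rcases hchord i hi j hj hab with h | h | ⟨ha1, ha2⟩ | ⟨ha1, ha2⟩
  · subst h; exact hsub i hj
  · subst h; exact (hsub j hi).symm
  · subst ha1; subst ha2; exact hsubc.symm
  · subst ha1; subst ha2; exact hsubc

end AuxLemmas

theorem hole_extraction_sp {V : Type*} [Fintype V] (G : SimpleGraph V)
    (hc : G.Connected) (u v : V) (huv : ¬ G.Adj u v)
    (W W' : G.Walk u v) (hW : IsInducedPath G W)
    (hW' : W'.IsPath) (hsp : W'.length = G.dist u v)
    (h1 : W'.getVert 1 ∉ W.support)
    (h1adj : ∀ y ∈ internals W, ¬ G.Adj (W'.getVert 1) y)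
    (h2 : W'.getVert 2 ∉ W.support)
    (h2adj : ¬ G.Adj (W'.getVert 2) (W.getVert 1)) :
    HasHole G := by
  classical
  obtain ⟨hWp, hWind⟩ := hW
  have memW : ∀ {i : ℕ}, i ≤ W.length → W.getVert i ∈ W.support := fun {i} hi =>
    Walk.mem_support_iff_exists_getVert.mpr ⟨i, rfl, hi⟩
  have hv2 : 2 ≤ W'.length := by
    by_contra hcon
    have hev : W'.getVert 1 = v := W'.getVert_of_length_le (by omega)
    rw [hev] at h1; exact h1 W.end_mem_support
  have hn2 : 2 ≤ W.length := by
    by_contra hcon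
    push_neg at hcon
    have h0 : W.getVert W.length = v := Walk.getVert_length W
    rcases (by omega : W.length = 0 ∨ W.length = 1) with hh | hh
    · rw [hh, Walk.getVert_zero] at h0
      have hd : G.dist u v = 0 := by rw [← h0]; exact SimpleGraph.dist_self
      omega
    · have hadjuv := W.adj_getVert_succ (i := 0) (by omega)
      rw [Walk.getVert_zero, show (0 + 1 : ℕ) = W.length by omega, h0] at hadjuv
      exact huv hadjuv
  have injW' : ∀ {i j : ℕ}, i ≤ W'.length → j ≤ W'.length →
      W'.getVert i = W'.getVert j → i = j := getVert_inj_of_isPath hW'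
  have injW : ∀ {i j : ℕ}, i ≤ W.length → j ≤ W.length →
      W.getVert i = W.getVert j → i = j := getVert_inj_of_isPath hWp
  have nochord' : ∀ a b : ℕ, a + 1 < b → b ≤ W'.length →
      ¬ G.Adj (W'.getVert a) (W'.getVert b) := by
    intro a b hab hb hadjab
    have d1 : G.dist u (W'.getVert a) ≤ a := dist_start_getVert_le hc W' a
    have d2 : G.dist (W'.getVert a) (W'.getVert b) ≤ 1 := by
      simpa using SimpleGraph.dist_le (Walk.cons hadjab Walk.nil)
    have d3 : G.dist (W'.getVert b) v ≤ W'.length - b := dist_getVert_end_le W' b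
    have t1 : G.dist u v ≤ G.dist u (W'.getVert b) + G.dist (W'.getVert b) v :=
      hc.dist_triangle
    have t2 : G.dist u (W'.getVert b) ≤
        G.dist u (W'.getVert a) + G.dist (W'.getVert a) (W'.getVert b) := hc.dist_triangle
    omega
  have hW'c : ∀ a b : ℕ, a ≤ W'.length → b ≤ W'.length →
      G.Adj (W'.getVert a) (W'.getVert b) → b = a + 1 ∨ a = b + 1 := by
    intro a b ha hb hadj
    have hne : a ≠ b := by
      intro hab; subst hab; exact hadj.ne rfl
    have hc1 : ¬ (a + 1 < b) := fun hlt => nochord' a b hlt hb hadj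
    have hc2 : ¬ (b + 1 < a) := fun hlt => nochord' b a hlt ha hadj.symm
    omega
  have hWc : ∀ a b : ℕ, a ≤ W.length → b ≤ W.length →
      G.Adj (W.getVert a) (W.getVert b) → b = a + 1 ∨ a = b + 1 := by
    intro a b ha hb hadj
    have := hWind _ (memW ha) _ (memW hb) hadj
    rw [Walk.toSubgraph_adj_iff] at this
    obtain ⟨i, heq, hi⟩ := this
    rw [Sym2.eq_iff] at heq
    rcases heq with ⟨e1, e2⟩ | ⟨e1, e2⟩
    · left
      have := injW (by omega) ha e1
      have := injW (by omega) hb e2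
      omega
    · right
      have := injW (by omega) hb e1
      have := injW (by omega) ha e2
      omega
  have hx1v : ¬ G.Adj (W'.getVert 1) v := by
    intro hadj
    have hu1 : G.Adj u (W'.getVert 1) := by
      have := W'.adj_getVert_succ (i := 0) (by omega)
      simpa using this
    have hd : G.dist u v ≤ 2 := by
      simpa using SimpleGraph.dist_le (Walk.cons hu1 (Walk.cons hadj Walk.nil))
    have hev : W'.getVert 2 = v := W'.getVert_of_length_le (by omega)
    rw [hev] at h2; exact h2 W.end_mem_support
  -- minimal q
  set Pq : ℕ → Prop := fun q => 2 ≤ q ∧ q ≤ W'.length ∧ ∃ p, 1 ≤ p ∧ p ≤ W.length ∧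
      (W.getVert p = W'.getVert q ∨ G.Adj (W.getVert p) (W'.getVert q)) with hPqdef
  have hexQ : ∃ q, Pq q := by
    refine ⟨W'.length, hv2, le_rfl, W.length, by omega, le_rfl, Or.inl ?_⟩
    rw [Walk.getVert_length, Walk.getVert_length]
  set Q := Nat.find hexQ with hQdef
  obtain ⟨hQ2, hQh, hexP⟩ := Nat.find_spec hexQ
  have hQmin : ∀ k, k < Q → ¬ Pq k := fun k hk => Nat.find_min hexQ hk
  set P := Nat.find hexP with hPdef
  obtain ⟨hP1, hPn, hPor⟩ := Nat.find_spec hexP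
  have hPmin : ∀ k, k < P → ¬ (1 ≤ k ∧ k ≤ W.length ∧
      (W.getVert k = W'.getVert Q ∨ G.Adj (W.getVert k) (W'.getVert Q))) :=
    fun k hk => Nat.find_min hexP hk
  -- the equality case is impossible
  have heqPQ : W.getVert P ≠ W'.getVert Q := by
    intro he
    rcases Nat.lt_or_ge Q 3 with h3 | h3
    · have hq2 : Q = 2 := by omega
      rw [hq2] at he
      exact h2 (he ▸ memW hPn)
    · have hadjq : G.Adj (W'.getVert (Q - 1)) (W'.getVert Q) := by
        have := W'.adj_getVert_succ (i := Q - 1) (by omega)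
        rwa [show Q - 1 + 1 = Q by omega] at this
      exact hQmin (Q - 1) (by omega)
        ⟨by omega, by omega, P, hP1, hPn, Or.inr (by rw [he]; exact hadjq.symm)⟩
  have hPadj : G.Adj (W.getVert P) (W'.getVert Q) := hPor.resolve_left heqPQ
  have hm5 : 5 ≤ P + Q + 1 := by
    by_contra hcon
    have hq2 : Q = 2 := by omega
    have hp1 : P = 1 := by omega
    apply h2adj
    rw [← hq2, ← hp1]
    exact hPadj.symm
  set m := P + Q + 1 with hmdef
  set g : ℕ → V := fun i => if i ≤ P then W.getVert i else W'.getVert (m - i) with hgdef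
  have gW : ∀ i, i ≤ P → g i = W.getVert i := fun i hi => if_pos hi
  have gW' : ∀ i, P < i → g i = W'.getVert (m - i) := fun i hi => if_neg (by omega)
  -- injectivity
  have auxinj : ∀ i j, i ≤ j → j < m → g i = g j → i = j := by
    intro i j hij hj hgij
    by_cases hjP : j ≤ P
    · rw [gW i (by omega), gW j hjP] at hgij
      exact injW (by omega) (by omega) hgij
    · push_neg at hjP
      by_cases hiP : i ≤ P
      · exfalso
        rw [gW i hiP, gW' j hjP] at hgij
        have hk1 : 1 ≤ m - j := by omega
        have hkQ : m - j ≤ Q := by omega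
        rcases eq_or_lt_of_le hk1 with hk1' | hk1'
        · rw [← hk1'] at hgij
          exact h1 (hgij ▸ memW (by omega))
        · rcases eq_or_lt_of_le hkQ with hkQ' | hkQ'
          · rw [hkQ'] at hgij
            rcases Nat.eq_zero_or_pos i with hi0 | hi0
            · subst hi0
              have hgij' : W'.getVert 0 = W'.getVert Q := by
                rw [Walk.getVert_zero]; rw [Walk.getVert_zero] at hgij; exact hgij
              have := injW' (by omega) (by omega) hgij'
              omega
            · rcases eq_or_lt_of_le (show i ≤ P by omega) with hiP' | hiP'
              · exact heqPQ (hiP' ▸ hgij)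
              · exact hPmin i (by omega) ⟨by omega, by omega, Or.inl hgij⟩
          · rcases Nat.eq_zero_or_pos i with hi0 | hi0
            · subst hi0
              have hgij' : W'.getVert 0 = W'.getVert (m - j) := by
                rw [Walk.getVert_zero]; rw [Walk.getVert_zero] at hgij; exact hgij
              have := injW' (by omega) (by omega) hgij'
              omega
            · exact hQmin (m - j) (by omega) ⟨by omega, by omega, i, by omega, by omega,
                Or.inl hgij⟩
      · push_neg at hiP
        rw [gW' i hiP, gW' j hjP] at hgij
        have := injW' (i := m - i) (j := m - j) (by omega) (by omega) hgij
        omega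
  -- edges
  have hadjg : ∀ i, i + 1 < m → G.Adj (g i) (g (i + 1)) := by
    intro i hi
    by_cases hiP : i + 1 ≤ P
    · rw [gW i (by omega), gW (i + 1) hiP]
      exact W.adj_getVert_succ (by omega)
    · by_cases hiP' : i ≤ P
      · have hip : i = P := by omega
        rw [gW i (by omega), gW' (i + 1) (by omega), show m - (i + 1) = Q by omega, hip]
        exact hPadj

      · push_neg at hiP'
        rw [gW' i hiP', gW' (i + 1) (by omega)]
        have hlt : m - (i + 1) < W'.length := by omega
        have := W'.adj_getVert_succ hlt
        rw [show m - (i + 1) + 1 = m - i by omega] at this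
        exact this.symm
  -- closing edge
  have hclose : G.Adj (g (m - 1)) (g 0) := by
    rw [gW' (m - 1) (by omega), gW 0 (by omega), show m - (m - 1) = 1 by omega,
      Walk.getVert_zero]
    have := W'.adj_getVert_succ (i := 0) (by omega)
    simpa using this.symm
  -- chords
  have auxch : ∀ i j, i ≤ j → j < m → G.Adj (g i) (g j) →
      j = i + 1 ∨ (i = 0 ∧ j = m - 1) := by
    intro i j hij hj hadj0
    by_cases hjP : j ≤ P
    · rw [gW i (by omega), gW j hjP] at hadj0
      have := hWc i j (by omega) (by omega) hadj0
      left; omega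
    · push_neg at hjP
      by_cases hiP : i ≤ P
      · rw [gW i hiP, gW' j hjP] at hadj0
        have hk1 : 1 ≤ m - j := by omega
        have hkQ : m - j ≤ Q := by omega
        rcases Nat.eq_zero_or_pos i with hi0 | hi0
        · subst hi0
          have hadj1 : G.Adj (W'.getVert 0) (W'.getVert (m - j)) := by
            rw [Walk.getVert_zero]
            rw [Walk.getVert_zero] at hadj0
            exact hadj0
          have := hW'c 0 (m - j) (by omega) (by omega) hadj1
          right
          exact ⟨rfl, by omega⟩
        · rcases eq_or_lt_of_le hk1 with hk1' | hk1'
          · exfalso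
            rw [← hk1'] at hadj0
            rcases eq_or_lt_of_le (show i ≤ W.length by omega) with hin | hin
            · rw [hin, Walk.getVert_length] at hadj0
              exact hx1v hadj0.symm
            · exact h1adj (W.getVert i) (getVert_mem_internals W (by omega) hin) hadj0.symm
          · rcases eq_or_lt_of_le hkQ with hkQ' | hkQ'
            · rw [hkQ'] at hadj0
              rcases eq_or_lt_of_le (show i ≤ P by omega) with hiP' | hiP'
              · left; omega
              · exact absurd (show 1 ≤ i ∧ i ≤ W.length ∧ (W.getVert i = W'.getVert Q ∨ G.Adj (W.getVert i) (W'.getVert Q)) from ⟨by omega, by omega, Or.inr hadj0⟩) (hPmin i (by omega))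

            · exact absurd (show Pq (m - j) from ⟨by omega, by omega, i, by omega, by omega, Or.inr hadj0⟩) (hQmin (m - j) (by omega))

      · push_neg at hiP
        rw [gW' i hiP, gW' j hjP] at hadj0
        have := hW'c (m - i) (m - j) (by omega) (by omega) hadj0
        left; omega
  refine hasHole_of_fun g m hm5 (fun i hi j hj hg => ?_) hadjg hclose
    (fun i hi j hj hadj0 => ?_)
  · rcases le_total i j with h | h
    · exact auxinj i j h hj hg
    · exact (auxinj j i h hi hg.symm).symm
  · rcases le_total i j with h | h
    · rcases auxch i j h hj hadj0 with h' | h'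
      · exact Or.inl h'
      · exact Or.inr (Or.inr (Or.inl h'))
    · rcases auxch j i h hi hadj0.symm with h' | h'
      · exact Or.inr (Or.inl h')
      · exact Or.inr (Or.inr (Or.inr h'))
end
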